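/- arXiv:1601.00247 — 6 statements merged into one kernel-verified Lean document; each statement's English description precedes it below -/
import Mathlib

section
/- Let F be a field and V a Lagrangian subspace of F^n × F^n with respect to the standard symplectic form. Then there is a partition of {1,…,n} into two sets S and T such that: (i) for every (x₁,x₂) ∈ V, if x₁ vanishes on all coordinates in S then x₁ = 0; and (ii) the linear map V → F^S × F^T sending (x₁,x₂) to (x₁|_S, x₂|_T) is an isomorphism. -/
open Module

/-- For a Lagrangian subspace `V` of `F^n × F^n` (with respect to the standard symplectic
form `ω((x₁,x₂),(y₁,y₂)) = ⟨x₂,y₁⟩ − ⟨x₁,y₂⟩`), there is a partition of the index set into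
sets `S` and `T = Sᶜ` such that (i) any element of `V` whose first (potential) component
vanishes on `S` has vanishing first component, and (ii) projection onto the `S`-potentials
and `T`-currents is a linear isomorphism `V → F^S × F^T`. -/
theorem stmt6 {F : Type*} [Field F] {n : ℕ}
    (V : Submodule F ((Fin n → F) × (Fin n → F)))
    (hiso : ∀ x ∈ V, ∀ y ∈ V,
      (∑ j, x.2 j * y.1 j) - (∑ j, x.1 j * y.2 j) = 0)
    (hdim : finrank F V = n) :
    ∃ S : Finset (Fin n),
      (∀ x ∈ V, (∀ i ∈ S, x.1 i = 0) → x.1 = 0) ∧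
      Function.Bijective (fun v : V =>
        (((fun i : {i // i ∈ S} => (v : (Fin n → F) × (Fin n → F)).1 i) : {i // i ∈ S} → F),
         ((fun i : {i // i ∉ S} => (v : (Fin n → F) × (Fin n → F)).2 i) : {i // i ∉ S} → F))) := by
  classical
  set W : Submodule F (Fin n → F) := V.map (LinearMap.fst F _ _) with hW
  let φ : Fin n → Module.Dual F W := fun j => (LinearMap.proj j).comp W.subtype
  have hφ : ∀ j (w : W), φ j w = (w : Fin n → F) j := fun j w => rfl
  -- the coordinate functionals span the dual of W
  have hspan : Submodule.span F (Set.range φ) = ⊤ := by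
    rw [eq_top_iff]
    rintro f -
    obtain ⟨g, hg⟩ := LinearMap.exists_extend f
    have hf : f = ∑ j, g (fun k => if j = k then 1 else 0) • φ j := by
      ext w
      have h1 : f w = g (w : Fin n → F) := by
        rw [← hg]; rfl
      rw [h1, LinearMap.pi_apply_eq_sum_univ g (w : Fin n → F)]
      simp only [LinearMap.sum_apply, LinearMap.smul_apply, hφ, smul_eq_mul]
      exact Finset.sum_congr rfl fun j _ => mul_comm _ _
    rw [hf]
    exact Submodule.sum_mem _ fun j _ =>
      Submodule.smul_mem _ _ (Submodule.subset_span ⟨j, rfl⟩)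
  obtain ⟨t, hts, htspan, htind⟩ := exists_linearIndependent F (Set.range φ)
  rw [hspan] at htspan
  haveI : Fintype t := ((Set.finite_range φ).subset hts).fintype
  choose c hc using fun u : t => hts u.2
  have hcinj : Function.Injective c := by
    intro u u' h
    have : (u : Module.Dual F W) = u' := by rw [← hc u, ← hc u', h]
    exact Subtype.ext this
  set S : Finset (Fin n) := Finset.image c Finset.univ with hS
  -- property (A): vanishing on S forces vanishing
  have hA : ∀ w : W, (∀ j ∈ S, (w : Fin n → F) j = 0) → w = 0 := by
    intro w hw0
    have hker : (⊤ : Submodule F (Module.Dual F W)) ≤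
        LinearMap.ker (Module.Dual.eval F (Module.Dual F W) |>.flip ((Module.Dual.eval F W) w)) := by
      rw [← htspan]
      refine Submodule.span_le.2 ?_
      intro u hu
      have hmem : c ⟨u, hu⟩ ∈ S := Finset.mem_image.2 ⟨⟨u, hu⟩, Finset.mem_univ _, rfl⟩
      have h2 : ((w : Fin n → F)) (c ⟨u, hu⟩) = u w := LinearMap.congr_fun (hc ⟨u, hu⟩) w
      have : u w = 0 := by rw [← h2]; exact hw0 _ hmem
      simpa [LinearMap.mem_ker] using this
    have hall : ∀ f : Module.Dual F W, f w = 0 := by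
      intro f
      have := hker (Submodule.mem_top (x := f))
      simpa using this
    have : (w : Fin n → F) = 0 := funext fun k => hall (φ k)
    exact Subtype.ext this
  -- property (B): a vector supported on S pairing to zero with all of W is zero
  have hB : ∀ d : Fin n → F, (∀ j ∉ S, d j = 0) →
      (∀ w : W, ∑ j, d j * (w : Fin n → F) j = 0) → d = 0 := by
    intro d hd0 hpair
    have hsum : ∑ u : t, d (c u) • (u : Module.Dual F W) = 0 := by
      ext w
      simp only [LinearMap.sum_apply, LinearMap.smul_apply, LinearMap.zero_apply, smul_eq_mul]
      have h1 : ∑ u : t, d (c u) * (u : Module.Dual F W) w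
          = ∑ j ∈ S, d j * (w : Fin n → F) j := by
        rw [hS, Finset.sum_image (fun x _ y _ h => hcinj h)]
        exact Finset.sum_congr rfl fun u _ => by rw [← hc u, hφ]
      rw [h1]
      rw [Finset.sum_subset (Finset.subset_univ S)
        (fun j _ hj => by rw [hd0 j hj, zero_mul])]
      exact hpair w
    have hzero : ∀ u : t, d (c u) = 0 :=
      Fintype.linearIndependent_iff.1 htind (fun u => d (c u)) hsum
    funext j
    by_cases hj : j ∈ S
    · obtain ⟨u, -, rfl⟩ := Finset.mem_image.1 hj
      exact hzero u
    · exact hd0 j hj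
  -- part (i)
  have part1 : ∀ x ∈ V, (∀ i ∈ S, x.1 i = 0) → x.1 = 0 := by
    intro x hx h0
    have hxW : x.1 ∈ W := ⟨x, hx, rfl⟩
    have := hA ⟨x.1, hxW⟩ h0
    exact congrArg Subtype.val this
  -- the linear map
  let T : V →ₗ[F] ({i // i ∈ S} → F) × ({i // i ∉ S} → F) :=
    LinearMap.prod
      ((LinearMap.pi fun i : {i // i ∈ S} =>
        (LinearMap.proj (i : Fin n)).comp (LinearMap.fst F (Fin n → F) (Fin n → F))).comp V.subtype)
      ((LinearMap.pi fun i : {i // i ∉ S} =>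
        (LinearMap.proj (i : Fin n)).comp (LinearMap.snd F (Fin n → F) (Fin n → F))).comp V.subtype)
  have hTinj : Function.Injective T := by
    rw [← LinearMap.ker_eq_bot, Submodule.eq_bot_iff]
    intro v hv
    rw [LinearMap.mem_ker] at hv
    have h1 : ∀ i ∈ S, (v : (Fin n → F) × (Fin n → F)).1 i = 0 := fun i hi =>
      congrFun (congrArg Prod.fst hv) ⟨i, hi⟩
    have h2 : ∀ i ∉ S, (v : (Fin n → F) × (Fin n → F)).2 i = 0 := fun i hi =>
      congrFun (congrArg Prod.snd hv) ⟨i, hi⟩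
    have hx1 : (v : (Fin n → F) × (Fin n → F)).1 = 0 := part1 _ v.2 h1
    have hpair : ∀ w : W, ∑ j, (v : (Fin n → F) × (Fin n → F)).2 j * (w : Fin n → F) j = 0 := by
      rintro ⟨w, y, hy, rfl⟩
      have := hiso _ v.2 y hy
      rw [hx1] at this
      simpa using this
    have hx2 : (v : (Fin n → F) × (Fin n → F)).2 = 0 := hB _ h2 hpair
    exact Subtype.ext (Prod.ext hx1 hx2)
  have hcard : finrank F (({i // i ∈ S} → F) × ({i // i ∉ S} → F)) = finrank F V := by
    rw [hdim, Module.finrank_prod, Module.finrank_fintype_fun_eq_card,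
      Module.finrank_fintype_fun_eq_card, Fintype.card_subtype_compl, Fintype.card_fin]
    have he : Fintype.card { i // i ∈ S } = Fintype.card { x // x ∈ S } := rfl
    have hle : Fintype.card { x // x ∈ S } ≤ n := by
      simpa using Fintype.card_le_of_injective
        (Subtype.val : { x // x ∈ S } → Fin n) Subtype.val_injective
    omega
  have hTsurj : Function.Surjective T :=
    (LinearMap.injective_iff_surjective_of_finrank_eq_finrank hcard.symm).1 hTinj
  exact ⟨S, part1, hTinj, hTsurj⟩
end

section
/- Let F be a field and Λ a Lagrangian subspace of F^n × F^n containing c₀ = ((1,…,1),(0,…,0)). Then there exists A in the electrical linear group EL_n(F) such that Λ = A·(F^n × {0}), i.e., Λ is the image of the subspace F^n × {0} under the invertible matrix A. -/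
/-!
If `Λ` meets `{0} × Fⁿ` trivially it is the graph `{(x, M x)}` of a matrix `M`, which is
symmetric because `Λ` is isotropic and has zero row sums because `c₀ ∈ Λ`. Such an `M` is a
linear combination of the matrices `E_{i,i} − E_{i,j} − E_{j,i} + E_{j,j}`, so
`[[I, 0], [M, I]] ∈ EL_n(F)`, and it maps `Fⁿ × {0}` onto `Λ`.

Otherwise take `v ∈ Λ ∩ ({0} × Fⁿ)` with `v_{n+j} ≠ 0`. The generator `Ξ_j(1)` preserves `ω`
and fixes `c₀`, and isotropy against `v` shows that it strictly lowers
`dim (Λ ∩ ({0} × Fⁿ))`; induct on this dimension.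
-/

open Module

/-- The generator `Ξ_j(t) = [[I, t E_{j,j}], [0, I]]` of the electrical linear group,
corresponding to adjoining a boundary spike at vertex `j`. -/
def XiD {F : Type*} [Field F] {n : ℕ} (j : Fin n) (t : F) :
    Matrix (Fin n ⊕ Fin n) (Fin n ⊕ Fin n) F :=
  Matrix.fromBlocks 1 (Matrix.single j j t) 0 1

/-- The generator `Ξ_{i,j}(t) = [[I, 0], [t(E_{i,i} − E_{i,j} − E_{j,i} + E_{j,j}), I]]`
of the electrical linear group, corresponding to adjoining a boundary edge from `i` to `j`. -/
def XiOff {F : Type*} [Field F] {n : ℕ} (i j : Fin n) (t : F) :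
    Matrix (Fin n ⊕ Fin n) (Fin n ⊕ Fin n) F :=
  Matrix.fromBlocks 1 0
    (t • (Matrix.single i i (1 : F) - Matrix.single i j 1
      - Matrix.single j i 1 + Matrix.single j j 1)) 1

/-- The generating set of the electrical linear group inside `GL_{2n}(F)`. -/
def ELGen (F : Type*) [Field F] (n : ℕ) :
    Set ((Matrix (Fin n ⊕ Fin n) (Fin n ⊕ Fin n) F)ˣ) :=
  {A | (∃ j t, (A : Matrix (Fin n ⊕ Fin n) (Fin n ⊕ Fin n) F) = XiD j t) ∨
       (∃ i j t, i ≠ j ∧ (A : Matrix (Fin n ⊕ Fin n) (Fin n ⊕ Fin n) F) = XiOff i j t)}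

/-- The electrical linear group `EL_n(F)`: the subgroup of `GL_{2n}(F)` generated by all
the matrices `Ξ_j(t)` and `Ξ_{i,j}(t)`. -/
def EL (F : Type*) [Field F] (n : ℕ) :
    Subgroup ((Matrix (Fin n ⊕ Fin n) (Fin n ⊕ Fin n) F)ˣ) :=
  Subgroup.closure (ELGen F n)

open Matrix

section ElectricalLagrangian

variable {F : Type*} [Field F] {n : ℕ}

section BlockShears

def upperBlock (L : Matrix (Fin n) (Fin n) F) : Matrix (Fin n ⊕ Fin n) (Fin n ⊕ Fin n) F :=
  fromBlocks 1 L 0 1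

def lowerBlock (L : Matrix (Fin n) (Fin n) F) : Matrix (Fin n ⊕ Fin n) (Fin n ⊕ Fin n) F :=
  fromBlocks 1 0 L 1

lemma lowerBlock_mul_lowerBlock (L L' : Matrix (Fin n) (Fin n) F) :
    lowerBlock L * lowerBlock L' = lowerBlock (L + L') := by
  simp [lowerBlock, fromBlocks_multiply, add_comm]

lemma lowerBlock_zero : lowerBlock (0 : Matrix (Fin n) (Fin n) F) = 1 :=
  fromBlocks_one

def lowerBlockUnit (L : Matrix (Fin n) (Fin n) F) :
    (Matrix (Fin n ⊕ Fin n) (Fin n ⊕ Fin n) F)ˣ where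
  val := lowerBlock L
  inv := lowerBlock (-L)
  val_inv := by rw [lowerBlock_mul_lowerBlock, add_neg_cancel, lowerBlock_zero]
  inv_val := by rw [lowerBlock_mul_lowerBlock, neg_add_cancel, lowerBlock_zero]

lemma lowerBlockUnit_zero : lowerBlockUnit (0 : Matrix (Fin n) (Fin n) F) = 1 :=
  Units.ext lowerBlock_zero

lemma lowerBlockUnit_add (L L' : Matrix (Fin n) (Fin n) F) :
    lowerBlockUnit (L + L') = lowerBlockUnit L * lowerBlockUnit L' :=
  Units.ext (lowerBlock_mul_lowerBlock L L').symm

def lowerEL (F : Type*) [Field F] (n : ℕ) : AddSubgroup (Matrix (Fin n) (Fin n) F) where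
  carrier := {L | lowerBlockUnit L ∈ EL F n}
  zero_mem' := by
    simpa only [Set.mem_ofPred_eq, lowerBlockUnit_zero] using (EL F n).one_mem
  add_mem' {L L'} hL hL' := by
    simpa only [Set.mem_ofPred_eq, lowerBlockUnit_add] using mul_mem hL hL'
  neg_mem' {L} hL := by
    have : lowerBlockUnit (-L) = (lowerBlockUnit L)⁻¹ := eq_inv_of_mul_eq_one_left <| by
      rw [← lowerBlockUnit_add, neg_add_cancel, lowerBlockUnit_zero]
    simpa only [Set.mem_ofPred_eq, this] using inv_mem hL

def edgeMatrix (i j : Fin n) : Matrix (Fin n) (Fin n) F :=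
  single i i 1 - single i j 1 - single j i 1 + single j j 1

lemma smul_edgeMatrix_mem_lowerEL {i j : Fin n} (hij : i ≠ j) (t : F) :
    t • edgeMatrix i j ∈ lowerEL F n :=
  Subgroup.subset_closure (Or.inr ⟨i, j, t, hij, rfl⟩)

lemma sum_sum_eq_sum_sum_ite_lt {ι M : Type*} [Fintype ι] [LinearOrder ι] [AddCommMonoid M]
    (f : ι → ι → M) (hf : ∀ i, f i i = 0) :
    ∑ i, ∑ j, f i j = ∑ i, ∑ j, if i < j then f i j + f j i else 0 := by
  have split : ∀ i j, f i j = (if i < j then f i j else 0) + (if j < i then f i j else 0) := by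
    intro i j
    rcases lt_trichotomy i j with h | rfl | h
    · simp [h, h.not_gt]
    · simp [hf]
    · simp [h, h.not_gt]
  rw [Fintype.sum_congr _ _ fun i => Fintype.sum_congr _ _ fun j => split i j]
  simp_rw [Finset.sum_add_distrib, ite_add_zero]
  rw [Finset.sum_comm (f := fun i j => if j < i then f i j else 0)]
  simp_rw [← Finset.sum_add_distrib]

-- `M = ∑_{i<j} (-M i j) • edgeMatrix i j`
lemma mem_lowerEL_of_isSymm {M : Matrix (Fin n) (Fin n) F} (hM : M.IsSymm)
    (hrow : M *ᵥ 1 = 0) : M ∈ lowerEL F n := by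
  have hsum : M = ∑ i, ∑ j, M i j • (single i j (1 : F) - single i i 1) := by
    have hdiag : ∑ i, ∑ j, M i j • single i i (1 : F) = 0 := by
      simp_rw [← Finset.sum_smul]
      refine Finset.sum_eq_zero fun i _ => ?_
      have := congrFun hrow i
      simp only [mulVec, dotProduct, Pi.one_apply, mul_one, Pi.zero_apply] at this
      rw [this, zero_smul]
    simp_rw [smul_sub, Finset.sum_sub_distrib, hdiag, sub_zero, smul_single, smul_eq_mul, mul_one]
    exact matrix_eq_sum_single M
  rw [hsum, sum_sum_eq_sum_sum_ite_lt _ (by simp)]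
  refine AddSubgroup.sum_mem _ fun i _ => AddSubgroup.sum_mem _ fun j _ => ?_
  split_ifs with hij
  · convert smul_edgeMatrix_mem_lowerEL hij.ne (-M i j) using 1
    rw [← hM.apply i j]
    simp only [edgeMatrix]
    module
  · exact zero_mem _

end BlockShears

section Symplectic

def sympForm (x y : Fin n ⊕ Fin n → F) : F :=
  (x ∘ Sum.inr) ⬝ᵥ (y ∘ Sum.inl) - (x ∘ Sum.inl) ⬝ᵥ (y ∘ Sum.inr)

def IsIsotropic (Λ : Submodule F (Fin n ⊕ Fin n → F)) : Prop :=
  ∀ x ∈ Λ, ∀ y ∈ Λ, sympForm x y = 0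

def IsLagrangian (Λ : Submodule F (Fin n ⊕ Fin n → F)) : Prop :=
  IsIsotropic Λ ∧ finrank F Λ = n

lemma upperBlock_mulVec (L : Matrix (Fin n) (Fin n) F) (x : Fin n ⊕ Fin n → F) :
    upperBlock L *ᵥ x = Sum.elim (x ∘ Sum.inl + L *ᵥ (x ∘ Sum.inr)) (x ∘ Sum.inr) := by
  simp [upperBlock, fromBlocks_mulVec]

lemma sympForm_upperBlock_mulVec {L : Matrix (Fin n) (Fin n) F} (hL : L.IsSymm)
    (x y : Fin n ⊕ Fin n → F) :
    sympForm (upperBlock L *ᵥ x) (upperBlock L *ᵥ y) = sympForm x y := by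
  simp only [sympForm, upperBlock_mulVec, Sum.elim_comp_inl, Sum.elim_comp_inr,
    dotProduct_add, add_dotProduct, dotProduct_mulVec, ← mulVec_transpose, hL.eq]
  rw [dotProduct_comm (L *ᵥ _)]
  ring

lemma isSymm_single_self (j : Fin n) (t : F) : (single j j t).IsSymm :=
  transpose_single j j t

lemma XiD_eq_upperBlock (j : Fin n) (t : F) : XiD j t = upperBlock (single j j t) :=
  rfl

lemma XiD_mul_XiD (j : Fin n) (s t : F) : XiD j s * XiD j t = XiD j (s + t) := by
  simp [XiD, fromBlocks_multiply, single_add, add_comm]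

def XiDUnit (j : Fin n) (t : F) : (Matrix (Fin n ⊕ Fin n) (Fin n ⊕ Fin n) F)ˣ where
  val := XiD j t
  inv := XiD j (-t)
  val_inv := by rw [XiD_mul_XiD, add_neg_cancel, XiD, single_zero, fromBlocks_one]
  inv_val := by rw [XiD_mul_XiD, neg_add_cancel, XiD, single_zero, fromBlocks_one]

lemma XiDUnit_mem_EL (j : Fin n) (t : F) : XiDUnit j t ∈ EL F n :=
  Subgroup.subset_closure (Or.inl ⟨j, t, rfl⟩)

end Symplectic

section Subspaces

-- `Fⁿ × {0}` and `{0} × Fⁿ`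
def zeroCurrents (F : Type*) [Field F] (n : ℕ) : Submodule F (Fin n ⊕ Fin n → F) :=
  LinearMap.ker (LinearMap.funLeft F F Sum.inr)

def zeroPotentials (F : Type*) [Field F] (n : ℕ) : Submodule F (Fin n ⊕ Fin n → F) :=
  LinearMap.ker (LinearMap.funLeft F F Sum.inl)

lemma mem_zeroCurrents {w : Fin n ⊕ Fin n → F} : w ∈ zeroCurrents F n ↔ w ∘ Sum.inr = 0 :=
  Iff.rfl

lemma mem_zeroPotentials {w : Fin n ⊕ Fin n → F} : w ∈ zeroPotentials F n ↔ w ∘ Sum.inl = 0 :=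
  Iff.rfl

def c₀ : Fin n ⊕ Fin n → F := Sum.elim 1 0

lemma finrank_map_mulVecLin_units {ι : Type*} [Fintype ι] [DecidableEq ι]
    (g : (Matrix ι ι F)ˣ) (p : Submodule F (ι → F)) :
    finrank F (p.map (mulVecLin (g : Matrix ι ι F))) = finrank F p :=
  LinearEquiv.finrank_map_eq (GeneralLinearGroup.toLin g).toLinearEquiv p

lemma map_mulVecLin_units_inv_map {ι : Type*} [Fintype ι] [DecidableEq ι]
    (g : (Matrix ι ι F)ˣ) (p : Submodule F (ι → F)) :
    (p.map (mulVecLin (g : Matrix ι ι F))).map (mulVecLin (↑g⁻¹ : Matrix ι ι F)) = p := by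
  rw [← Submodule.map_comp, ← mulVecLin_mul, ← Units.val_mul, inv_mul_cancel, Units.val_one,
    mulVecLin_one, Submodule.map_id]

lemma IsLagrangian.map_XiD {Λ : Submodule F (Fin n ⊕ Fin n → F)} (hΛ : IsLagrangian Λ)
    (j : Fin n) (t : F) : IsLagrangian (Λ.map (mulVecLin (XiD j t))) := by
  refine ⟨?_, (finrank_map_mulVecLin_units (XiDUnit j t) Λ).trans hΛ.2⟩
  rintro _ ⟨x, hx, rfl⟩ _ ⟨y, hy, rfl⟩
  rw [mulVecLin_apply, mulVecLin_apply, XiD_eq_upperBlock,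
    sympForm_upperBlock_mulVec (isSymm_single_self j t)]
  exact hΛ.1 x hx y hy

lemma c₀_mem_map_XiD {Λ : Submodule F (Fin n ⊕ Fin n → F)} (hc : c₀ ∈ Λ) (j : Fin n) (t : F) :
    c₀ ∈ Λ.map (mulVecLin (XiD j t)) := by
  refine ⟨c₀, hc, ?_⟩
  simp [XiD_eq_upperBlock, upperBlock_mulVec, c₀]

end Subspaces

section Graphs

variable {Λ : Submodule F (Fin n ⊕ Fin n → F)}

lemma mem_map_lowerBlock_zeroCurrents_iff (M : Matrix (Fin n) (Fin n) F)
    (w : Fin n ⊕ Fin n → F) :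
    w ∈ (zeroCurrents F n).map (mulVecLin (lowerBlock M)) ↔ w ∘ Sum.inr = M *ᵥ (w ∘ Sum.inl) := by
  have hmulVec (v : Fin n ⊕ Fin n → F) :
      lowerBlock M *ᵥ v = Sum.elim (v ∘ Sum.inl) (M *ᵥ (v ∘ Sum.inl) + v ∘ Sum.inr) := by
    simp [lowerBlock, fromBlocks_mulVec]
  constructor
  · rintro ⟨v, hv, rfl⟩
    rw [mulVecLin_apply, hmulVec, Sum.elim_comp_inl, Sum.elim_comp_inr, mem_zeroCurrents.1 hv,
      add_zero]
  · intro hw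
    refine ⟨Sum.elim (w ∘ Sum.inl) 0, mem_zeroCurrents.2 (Sum.elim_comp_inr _ _), ?_⟩
    rw [mulVecLin_apply, hmulVec, Sum.elim_comp_inl, Sum.elim_comp_inr, add_zero, ← hw,
      Sum.elim_comp_inl_inr]

lemma exists_matrix_mem_iff (hdim : finrank F Λ = n) (hbot : Λ ⊓ zeroPotentials F n = ⊥) :
    ∃ M : Matrix (Fin n) (Fin n) F, ∀ w, w ∈ Λ ↔ w ∘ Sum.inr = M *ᵥ (w ∘ Sum.inl) := by
  let p : Λ →ₗ[F] Fin n → F := LinearMap.funLeft F F Sum.inl ∘ₗ Λ.subtype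
  have hp : Function.Injective p := by
    rw [← LinearMap.ker_eq_bot, eq_bot_iff]
    intro x hx
    simpa [Submodule.mem_bot, hbot] using (Submodule.mem_inf.2 ⟨x.2, hx⟩ :
      (x : Fin n ⊕ Fin n → F) ∈ Λ ⊓ zeroPotentials F n)
  let e := p.linearEquivOfInjective hp (by rw [hdim, finrank_fin_fun])
  refine ⟨LinearMap.toMatrix' (LinearMap.funLeft F F Sum.inr ∘ₗ Λ.subtype ∘ₗ e.symm.toLinearMap),
    fun w => ⟨fun hw => ?_, fun hw => ?_⟩⟩
  · have : e.symm (w ∘ Sum.inl) = ⟨w, hw⟩ := e.symm_apply_eq.2 rfl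
    simp [LinearMap.toMatrix'_mulVec, this, LinearMap.funLeft]
  · have hl : (e.symm (w ∘ Sum.inl) : Fin n ⊕ Fin n → F) ∘ Sum.inl = w ∘ Sum.inl :=
      e.apply_symm_apply (w ∘ Sum.inl)
    have hr : (e.symm (w ∘ Sum.inl) : Fin n ⊕ Fin n → F) ∘ Sum.inr = w ∘ Sum.inr := by
      rw [hw, LinearMap.toMatrix'_mulVec]
      rfl
    rw [← Sum.elim_comp_inl_inr w, ← hl, ← hr, Sum.elim_comp_inl_inr]
    exact (e.symm _).2

lemma isSymm_of_mem_iff {M : Matrix (Fin n) (Fin n) F}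
    (hM : ∀ w, w ∈ Λ ↔ w ∘ Sum.inr = M *ᵥ (w ∘ Sum.inl)) (hiso : IsIsotropic Λ) : M.IsSymm := by
  let graph (x : Fin n → F) : Fin n ⊕ Fin n → F := Sum.elim x (M *ᵥ x)
  have hgraph x : graph x ∈ Λ := (hM _).2 rfl
  refine IsSymm.ext fun a b => ?_
  have := hiso _ (hgraph (Pi.single a 1)) _ (hgraph (Pi.single b 1))
  simpa [sympForm, graph, sub_eq_zero, eq_comm] using this

lemma mulVec_one_eq_zero_of_mem_iff {M : Matrix (Fin n) (Fin n) F}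
    (hM : ∀ w, w ∈ Λ ↔ w ∘ Sum.inr = M *ᵥ (w ∘ Sum.inl)) (hc : c₀ ∈ Λ) : M *ᵥ 1 = 0 :=
  ((hM c₀).1 hc).symm

lemma exists_mem_EL_eq_map_of_inf_zeroPotentials_eq_bot (hΛ : IsLagrangian Λ) (hc : c₀ ∈ Λ)
    (hbot : Λ ⊓ zeroPotentials F n = ⊥) :
    ∃ A ∈ EL F n, Λ = (zeroCurrents F n).map (mulVecLin (A : Matrix _ _ F)) := by
  obtain ⟨M, hM⟩ := exists_matrix_mem_iff hΛ.2 hbot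
  refine ⟨lowerBlockUnit M,
    mem_lowerEL_of_isSymm (isSymm_of_mem_iff hM hΛ.1) (mulVec_one_eq_zero_of_mem_iff hM hc), ?_⟩
  ext w
  rw [hM, lowerBlockUnit, Units.val_mk, mem_map_lowerBlock_zeroCurrents_iff]

end Graphs

section Reduction

variable {Λ : Submodule F (Fin n ⊕ Fin n → F)}

lemma finrank_map_XiD_inf_zeroPotentials_lt (hiso : IsIsotropic Λ) {v : Fin n ⊕ Fin n → F}
    (hv : v ∈ Λ ⊓ zeroPotentials F n) {j : Fin n} (hj : v (Sum.inr j) ≠ 0) :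
    finrank F ↥(Λ.map (mulVecLin (XiD j 1)) ⊓ zeroPotentials F n) <
      finrank F ↥(Λ ⊓ zeroPotentials F n) := by
  let W := Λ ⊓ zeroPotentials F n ⊓ LinearMap.ker (LinearMap.proj (Sum.inr j))
  have hle : Λ.map (mulVecLin (XiD j 1)) ⊓ zeroPotentials F n ≤ W.map (mulVecLin (XiD j 1)) := by
    intro x hx
    obtain ⟨⟨w, hw, rfl⟩, hgw⟩ := Submodule.mem_inf.1 hx
    have hl : w ∘ Sum.inl = -Pi.single j (w (Sum.inr j)) := by
      rwa [mem_zeroPotentials, mulVecLin_apply, XiD_eq_upperBlock, upperBlock_mulVec,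
        Sum.elim_comp_inl, single_mulVec, add_eq_zero_iff_eq_neg, one_mul] at hgw
    -- `v` has zero potentials, so `ω(v, w) = -v (inr j) * w (inr j)`
    have hr : w (Sum.inr j) = 0 := by
      have := hiso v (Submodule.mem_inf.1 hv).1 w hw
      rw [sympForm, hl, mem_zeroPotentials.1 (Submodule.mem_inf.1 hv).2] at this
      simpa [hj] using this
    have hw0 : w ∈ zeroPotentials F n := by
      rw [mem_zeroPotentials, hl, hr, Pi.single_zero, neg_zero]
    exact ⟨w, Submodule.mem_inf.2 ⟨Submodule.mem_inf.2 ⟨hw, hw0⟩, hr⟩, rfl⟩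
  have hlt : W < Λ ⊓ zeroPotentials F n :=
    lt_of_le_of_ne inf_le_left fun h => hj (h ▸ hv).2
  calc finrank F ↥(Λ.map (mulVecLin (XiD j 1)) ⊓ zeroPotentials F n)
      ≤ finrank F ↥(W.map (mulVecLin (XiD j 1))) := Submodule.finrank_mono hle
    _ ≤ finrank F W := Submodule.finrank_map_le _ _
    _ < finrank F ↥(Λ ⊓ zeroPotentials F n) := Submodule.finrank_lt_finrank_of_lt hlt

theorem exists_mem_EL_eq_map_zeroCurrents (hΛ : IsLagrangian Λ) (hc : c₀ ∈ Λ) :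
    ∃ A ∈ EL F n, Λ = (zeroCurrents F n).map (mulVecLin (A : Matrix _ _ F)) := by
  induction h : finrank F ↥(Λ ⊓ zeroPotentials F n) using Nat.strong_induction_on
    generalizing Λ with
  | _ d ih =>
  by_cases hbot : Λ ⊓ zeroPotentials F n = ⊥
  · exact exists_mem_EL_eq_map_of_inf_zeroPotentials_eq_bot hΛ hc hbot
  obtain ⟨v, hv, hv0⟩ := Submodule.exists_mem_ne_zero_of_ne_bot hbot
  obtain ⟨j, hj⟩ : ∃ j, v (Sum.inr j) ≠ 0 := by
    by_contra! hr
    have hl := mem_zeroPotentials.1 (Submodule.mem_inf.1 hv).2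
    exact hv0 (funext (Sum.forall.2 ⟨congrFun hl, hr⟩))
  obtain ⟨A, hA, hmap⟩ := ih _ (h ▸ finrank_map_XiD_inf_zeroPotentials_lt hΛ.1 hv hj)
    (hΛ.map_XiD j 1) (c₀_mem_map_XiD hc j 1) rfl
  refine ⟨(XiDUnit j 1)⁻¹ * A, mul_mem (inv_mem (XiDUnit_mem_EL j 1)) hA, ?_⟩
  rw [Units.val_mul, mulVecLin_mul, Submodule.map_comp, ← hmap]
  exact (map_mulVecLin_units_inv_map (XiDUnit j 1) Λ).symm

end Reduction

end ElectricalLagrangian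

theorem stmt7_general {F : Type*} [Field F] {n : ℕ}
    (Λ : Submodule F (Fin n ⊕ Fin n → F))
    (hiso : ∀ x ∈ Λ, ∀ y ∈ Λ,
      (∑ j, x (Sum.inr j) * y (Sum.inl j)) - (∑ j, x (Sum.inl j) * y (Sum.inr j)) = 0)
    (hdim : finrank F Λ = n)
    (hc : Sum.elim (1 : Fin n → F) (0 : Fin n → F) ∈ Λ) :
    ∃ A ∈ EL F n,
      Λ = Submodule.map
        (Matrix.mulVecLin (A : Matrix (Fin n ⊕ Fin n) (Fin n ⊕ Fin n) F))
        (LinearMap.ker (LinearMap.funLeft F F (Sum.inr : Fin n → Fin n ⊕ Fin n))) :=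
  exists_mem_EL_eq_map_zeroCurrents ⟨hiso, hdim⟩ hc

/-- Every Lagrangian subspace `Λ` of `F^n × F^n` (realized as `F^{Fin n ⊕ Fin n}`, with the
first summand carrying potentials and the second currents) containing
`c₀ = ((1,…,1),(0,…,0))` has the form `Λ = A·(F^n × {0})` for some `A ∈ EL_n(F)`. -/
theorem stmt7 {F : Type*} [Field F] {n : ℕ} (hn : 0 < n)
    (Λ : Submodule F (Fin n ⊕ Fin n → F))
    (hiso : ∀ x ∈ Λ, ∀ y ∈ Λ,
      (∑ j, x (Sum.inr j) * y (Sum.inl j)) - (∑ j, x (Sum.inl j) * y (Sum.inr j)) = 0)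
    (hdim : finrank F Λ = n)
    (hc : Sum.elim (1 : Fin n → F) (0 : Fin n → F) ∈ Λ) :
    ∃ A ∈ EL F n,
      Λ = Submodule.map
        (Matrix.mulVecLin (A : Matrix (Fin n ⊕ Fin n) (Fin n ⊕ Fin n) F))
        (LinearMap.ker (LinearMap.funLeft F F (Sum.inr : Fin n → Fin n ⊕ Fin n))) :=
  stmt7_general Λ hiso hdim hc
end

section
/- Let F be a field and n a positive integer. Every matrix A in the electrical linear group EL_n(F) is symplectic, i.e., Aᵀ Ω A = Ω where Ω is the 2n×2n block matrix [[0, −I],[I, 0]], and fixes the vector c₀ = (1,…,1,0,…,0) (n ones followed by n zeros): A c₀ = c₀. -/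
open Module

open Matrix in
/-- The symplectic form matrix `Ω = [[0, −I], [I, 0]]`. -/
def OmegaMat (F : Type*) [Field F] (n : ℕ) :
    Matrix (Fin n ⊕ Fin n) (Fin n ⊕ Fin n) F :=
  Matrix.fromBlocks 0 (-1) 1 0

/-!
The conditions "symplectic" and "fixes `c₀`" each cut out a subgroup of `GL_{2n}(F)`, so it
suffices to check them on the generators. Both kinds of generator are unipotent block matrices
`[[I, S], [0, I]]` or `[[I, 0], [S, I]]` with `S` symmetric, hence symplectic; the first fixes
every vector with vanishing lower half, and the second fixes `c₀` because the Laplacian block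
`E_{i,i} − E_{i,j} − E_{j,i} + E_{j,j}` has zero row sums.
-/

namespace Matrix

section Subgroups

variable {κ R : Type*} [Fintype κ] [DecidableEq κ] [CommRing R]

def unitsFixing (v : κ → R) : Subgroup (Matrix κ κ R)ˣ where
  carrier := {A | (A : Matrix κ κ R) *ᵥ v = v}
  one_mem' := one_mulVec v
  mul_mem' {A B} (hA : (A : Matrix κ κ R) *ᵥ v = v) (hB : (B : Matrix κ κ R) *ᵥ v = v) := by
    change ((A * B : (Matrix κ κ R)ˣ) : Matrix κ κ R) *ᵥ v = v
    rw [Units.val_mul, ← mulVec_mulVec, hB, hA]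
  inv_mem' {A} (hA : (A : Matrix κ κ R) *ᵥ v = v) := by
    change ((A⁻¹ : (Matrix κ κ R)ˣ) : Matrix κ κ R) *ᵥ v = v
    conv_lhs => rw [← hA, mulVec_mulVec, Units.inv_mul, one_mulVec]

theorem mem_unitsFixing {v : κ → R} {A : (Matrix κ κ R)ˣ} :
    A ∈ unitsFixing v ↔ (A : Matrix κ κ R) *ᵥ v = v :=
  Iff.rfl

variable (κ R) in
def symplecticUnits : Subgroup (Matrix (κ ⊕ κ) (κ ⊕ κ) R)ˣ where
  carrier := {A | (A : Matrix (κ ⊕ κ) (κ ⊕ κ) R) ∈ symplecticGroup κ R}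
  one_mem' := (symplecticGroup κ R).one_mem
  mul_mem' := (symplecticGroup κ R).mul_mem
  inv_mem' {A} hA := by
    change ((A⁻¹ : (Matrix (κ ⊕ κ) (κ ⊕ κ) R)ˣ) : Matrix (κ ⊕ κ) (κ ⊕ κ) R) ∈ symplecticGroup κ R
    rw [coe_units_inv, ← SymplecticGroup.coe_inv' ⟨_, hA⟩]
    exact Subtype.property _

theorem mem_symplecticUnits {A : (Matrix (κ ⊕ κ) (κ ⊕ κ) R)ˣ} :
    A ∈ symplecticUnits κ R ↔ (A : Matrix (κ ⊕ κ) (κ ⊕ κ) R) ∈ symplecticGroup κ R :=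
  Iff.rfl

end Subgroups

section EdgeLaplacian

variable {ι R : Type*} [DecidableEq ι] [Ring R]

def edgeLaplacian (i j : ι) : Matrix ι ι R :=
  single i i 1 - single i j 1 - single j i 1 + single j j 1

theorem edgeLaplacian_transpose (i j : ι) :
    (edgeLaplacian i j : Matrix ι ι R)ᵀ = edgeLaplacian i j := by
  simp only [edgeLaplacian, transpose_add, transpose_sub, transpose_single]
  abel

theorem edgeLaplacian_mulVec_one [Fintype ι] (i j : ι) :
    (edgeLaplacian i j : Matrix ι ι R) *ᵥ 1 = 0 := by
  simp [edgeLaplacian, add_mulVec, sub_mulVec, single_mulVec]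

end EdgeLaplacian

variable {ι R : Type*} [Fintype ι] [DecidableEq ι] [CommRing R]

theorem fromBlocks_one_upper_mem_symplecticGroup {S : Matrix ι ι R} (hS : Sᵀ = S) :
    fromBlocks (1 : Matrix ι ι R) S 0 1 ∈ symplecticGroup ι R :=
  SymplecticGroup.fromBlocks_mem_iff.2 ⟨by simp, by simp [hS], by simp⟩

theorem fromBlocks_one_lower_mem_symplecticGroup {S : Matrix ι ι R} (hS : Sᵀ = S) :
    fromBlocks (1 : Matrix ι ι R) 0 S 1 ∈ symplecticGroup ι R :=
  SymplecticGroup.fromBlocks_mem_iff.2 ⟨by simp [hS], by simp, by simp⟩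

theorem fromBlocks_one_upper_mulVec_elim_zero (S : Matrix ι ι R) (v : ι → R) :
    fromBlocks 1 S (0 : Matrix ι ι R) 1 *ᵥ Sum.elim v 0 = Sum.elim v 0 := by
  simp [fromBlocks_mulVec]

theorem fromBlocks_one_lower_mulVec_elim_zero {S : Matrix ι ι R} {v : ι → R}
    (hSv : S *ᵥ v = 0) :
    fromBlocks 1 (0 : Matrix ι ι R) S 1 *ᵥ Sum.elim v 0 = Sum.elim v 0 := by
  simp [fromBlocks_mulVec, hSv]

end Matrix

open Matrix

theorem XiOff_eq {F : Type*} [Field F] {n : ℕ} (i j : Fin n) (t : F) :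
    XiOff i j t = fromBlocks 1 0 (t • edgeLaplacian i j) 1 := rfl

theorem EL_le_symplecticUnits_inf_unitsFixing (F : Type*) [Field F] (n : ℕ) :
    EL F n ≤ symplecticUnits (Fin n) F ⊓ unitsFixing (Sum.elim 1 0) := by
  refine Subgroup.closure_le _ |>.2 ?_
  rintro A (⟨j, t, hA⟩ | ⟨i, j, t, -, hA⟩) <;>
    rw [SetLike.mem_coe, Subgroup.mem_inf, mem_symplecticUnits, mem_unitsFixing, hA] <;>
    refine ⟨?_, ?_⟩ <;> simp only [XiD, XiOff_eq]
  · exact fromBlocks_one_upper_mem_symplecticGroup (transpose_single j j t)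
  · exact fromBlocks_one_upper_mulVec_elim_zero _ _
  · exact fromBlocks_one_lower_mem_symplecticGroup (by
      rw [transpose_smul, edgeLaplacian_transpose])
  · exact fromBlocks_one_lower_mulVec_elim_zero (by
      rw [smul_mulVec, edgeLaplacian_mulVec_one, smul_zero])

open Matrix in
theorem stmt9_general {F : Type*} [Field F] {n : ℕ} :
    ∀ A ∈ EL F n,
      (A : Matrix (Fin n ⊕ Fin n) (Fin n ⊕ Fin n) F)ᵀ * OmegaMat F n
          * (A : Matrix (Fin n ⊕ Fin n) (Fin n ⊕ Fin n) F) = OmegaMat F n ∧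
      (A : Matrix (Fin n ⊕ Fin n) (Fin n ⊕ Fin n) F).mulVec
          (Sum.elim (1 : Fin n → F) (0 : Fin n → F))
        = Sum.elim (1 : Fin n → F) (0 : Fin n → F) := by
  intro A hA
  obtain ⟨hSymp, hFix⟩ := Subgroup.mem_inf.1 (EL_le_symplecticUnits_inf_unitsFixing F n hA)
  exact ⟨SymplecticGroup.mem_iff'.1 hSymp, hFix⟩

open Matrix in
/-- Every element of the electrical linear group `EL_n(F)` is a symplectic matrix
(`Aᵀ Ω A = Ω`) and fixes the vector `c₀ = (1,…,1,0,…,0)`. -/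
theorem stmt9 {F : Type*} [Field F] {n : ℕ} (hn : 0 < n) :
    ∀ A ∈ EL F n,
      (A : Matrix (Fin n ⊕ Fin n) (Fin n ⊕ Fin n) F)ᵀ * OmegaMat F n
          * (A : Matrix (Fin n ⊕ Fin n) (Fin n ⊕ Fin n) F) = OmegaMat F n ∧
      (A : Matrix (Fin n ⊕ Fin n) (Fin n ⊕ Fin n) F).mulVec
          (Sum.elim (1 : Fin n → F) (0 : Fin n → F))
        = Sum.elim (1 : Fin n → F) (0 : Fin n → F) :=
  stmt9_general
end

section
/- Let F be a field with more than two elements (F ≠ F₂) and n a positive integer. If A is a 2n×2n matrix over F which is symplectic (Aᵀ Ω A = Ω with Ω = [[0, −I],[I, 0]]) and satisfies A c₀ = c₀ where c₀ = (1,…,1,0,…,0) (n ones followed by n zeros), then A belongs to the electrical linear group EL_n(F). Consequently EL_n(F) is exactly the group of symplectic 2n×2n matrices fixing c₀. -/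
open Module

/-!
Write `eⱼ`, `fⱼ` for the standard basis vectors of the two halves of `F²ⁿ`. A symplectic
transvection `T(v, t) : x ↦ x + t ω(v, x) v` fixes `c₀` iff `ω(v, c₀) = 0`, and the generators of
`EL_n(F)` are the transvections along `eⱼ` and `fᵢ - fⱼ`. Call `v` an EL-direction if all
transvections along `v` lie in `EL_n(F)`. EL-directions are stable under `EL_n(F)`, so `v + λ u`
is one whenever `u`, `v` are and `ω(u, v) ≠ 0`; these moves change one coordinate (or a pair of
coordinates) at a time and reach every direction orthogonal to `c₀` except the multiples of
`c₀`, which come from Eichler's factorisation of `T(u + w)` for `ω(u, w) = 0`.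

Conversely, eliminating the hyperbolic pairs `(eₗ, fₗ)` one at a time with Witt-type pairs of
transvections writes a symplectic matrix fixing `e_{i₀}` as a product of transvections along
directions orthogonal to `e_{i₀}`. Conjugating by a symplectic `P` with `P e_{i₀} = c₀` turns
these into transvections along directions orthogonal to `c₀`, i.e. EL-directions. Both the
Eichler factorisation and the choice of the intermediate vectors need a scalar other than `0`
and `1`.
-/

namespace ElectricalLinearGroup

open Matrix SymplecticGroup

variable {ι R : Type*} [Fintype ι] [DecidableEq ι] [CommRing R]

def symplecticForm : (ι ⊕ ι → R) →ₗ[R] (ι ⊕ ι → R) →ₗ[R] R :=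
  toLinearMap₂' R (J ι R)

local notation "ω" => symplecticForm

theorem symplecticForm_elim (a b a' b' : ι → R) :
    ω (Sum.elim a b) (Sum.elim a' b') = b ⬝ᵥ a' - a ⬝ᵥ b' := by
  simp [symplecticForm, J, toLinearMap₂'_apply', fromBlocks_mulVec, neg_mulVec, dotProduct,
    Fintype.sum_sum_type]
  ring

theorem symplecticForm_apply (u v : ι ⊕ ι → R) :
    ω u v = (u ∘ Sum.inr) ⬝ᵥ (v ∘ Sum.inl) - (u ∘ Sum.inl) ⬝ᵥ (v ∘ Sum.inr) := by
  rw [← symplecticForm_elim, Sum.elim_comp_inl_inr, Sum.elim_comp_inl_inr]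

theorem symplecticForm_swap (u v : ι ⊕ ι → R) : ω v u = -ω u v := by
  rw [symplecticForm_apply, symplecticForm_apply, dotProduct_comm (v ∘ Sum.inr),
    dotProduct_comm (v ∘ Sum.inl), neg_sub]

theorem symplecticForm_self (v : ι ⊕ ι → R) : ω v v = 0 := by
  rw [symplecticForm_apply, dotProduct_comm, sub_self]

theorem symplecticForm_single_inl_right (u : ι ⊕ ι → R) (k : ι) :
    ω u (Pi.single (Sum.inl k) 1) = u (Sum.inr k) := by
  simp [symplecticForm_apply, dotProduct, Pi.single_apply]

theorem symplecticForm_single_inr_right (u : ι ⊕ ι → R) (k : ι) :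
    ω u (Pi.single (Sum.inr k) 1) = -u (Sum.inl k) := by
  simp [symplecticForm_apply, dotProduct, Pi.single_apply]

theorem symplecticForm_single_inl_left (k : ι) (v : ι ⊕ ι → R) :
    ω (Pi.single (Sum.inl k) 1) v = -v (Sum.inr k) := by
  rw [symplecticForm_swap, symplecticForm_single_inl_right]

theorem symplecticForm_single_inr_left (k : ι) (v : ι ⊕ ι → R) :
    ω (Pi.single (Sum.inr k) 1) v = v (Sum.inl k) := by
  rw [symplecticForm_swap, symplecticForm_single_inr_right, neg_neg]

theorem mem_symplecticGroup_iff_symplecticForm {A : Matrix (ι ⊕ ι) (ι ⊕ ι) R} :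
    A ∈ symplecticGroup ι R ↔ ∀ u v, ω (A *ᵥ u) (A *ᵥ v) = ω u v := by
  have key (u v : ι ⊕ ι → R) :
      toLinearMap₂' R (S₁ := R) (S₂ := R) (Aᵀ * J ι R * A) u v = ω (A *ᵥ u) (A *ᵥ v) := by
    simp only [symplecticForm, toLinearMap₂'_apply', ← mulVec_mulVec, dotProduct_mulVec,
      vecMul_transpose]
  rw [mem_iff', ← (toLinearMap₂' R (S₁ := R) (S₂ := R)).injective.eq_iff, LinearMap.ext_iff₂]
  simp only [key]
  rfl

theorem units_inv_mem_symplecticGroup {P : (Matrix (ι ⊕ ι) (ι ⊕ ι) R)ˣ}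
    (hP : (P : Matrix (ι ⊕ ι) (ι ⊕ ι) R) ∈ symplecticGroup ι R) :
    (↑P⁻¹ : Matrix (ι ⊕ ι) (ι ⊕ ι) R) ∈ symplecticGroup ι R := by
  rw [coe_units_inv, ← coe_inv' ⟨_, hP⟩]
  exact SetLike.coe_mem _

def symplecticPerp (S : Set (ι ⊕ ι → R)) : Submodule R (ι ⊕ ι → R) :=
  ⨅ y ∈ S, LinearMap.ker (symplecticForm.flip y)

theorem mem_symplecticPerp {S : Set (ι ⊕ ι → R)} {v : ι ⊕ ι → R} :
    v ∈ symplecticPerp S ↔ ∀ y ∈ S, ω v y = 0 := by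
  simp [symplecticPerp]

theorem symplecticPerp_anti {S S' : Set (ι ⊕ ι → R)} (h : S ⊆ S') :
    symplecticPerp S' ≤ symplecticPerp S := fun _ hv =>
  mem_symplecticPerp.2 fun y hy => mem_symplecticPerp.1 hv y (h hy)

theorem one_add_smul_vecMulVec_mulVec (v : ι ⊕ ι → R) (t : R) (x : ι ⊕ ι → R) :
    (1 + t • vecMulVec v (v ᵥ* J ι R)) *ᵥ x = x + (t * ω v x) • v := by
  rw [add_mulVec, one_mulVec, smul_mulVec, vecMulVec_mulVec, ← dotProduct_mulVec,
    op_smul_eq_smul, smul_smul, symplecticForm, toLinearMap₂'_apply']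

def symplecticTransvection (v : ι ⊕ ι → R) (t : R) : (Matrix (ι ⊕ ι) (ι ⊕ ι) R)ˣ where
  val := 1 + t • vecMulVec v (v ᵥ* J ι R)
  inv := 1 + (-t) • vecMulVec v (v ᵥ* J ι R)
  val_inv := ext_iff_mulVec.2 fun x => by
    rw [← mulVec_mulVec, one_add_smul_vecMulVec_mulVec, one_add_smul_vecMulVec_mulVec]
    simp [symplecticForm_self]
  inv_val := ext_iff_mulVec.2 fun x => by
    rw [← mulVec_mulVec, one_add_smul_vecMulVec_mulVec, one_add_smul_vecMulVec_mulVec]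
    simp [symplecticForm_self]

local notation "T" => symplecticTransvection

theorem symplecticTransvection_mulVec (v : ι ⊕ ι → R) (t : R) (x : ι ⊕ ι → R) :
    (T v t : Matrix (ι ⊕ ι) (ι ⊕ ι) R) *ᵥ x = x + (t * ω v x) • v :=
  one_add_smul_vecMulVec_mulVec v t x

theorem symplecticTransvection_mulVec_of_symplecticForm_eq_zero {v x : ι ⊕ ι → R}
    (h : ω v x = 0) (t : R) : (T v t : Matrix (ι ⊕ ι) (ι ⊕ ι) R) *ᵥ x = x := by
  simp [symplecticTransvection_mulVec, h]

theorem symplecticTransvection_zero_left (t : R) : T (0 : ι ⊕ ι → R) t = 1 :=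
  Units.ext <| ext_iff_mulVec.2 fun x => by simp [symplecticTransvection_mulVec]

theorem symplecticTransvection_smul (c : R) (v : ι ⊕ ι → R) (t : R) :
    T (c • v) t = T v (c * c * t) :=
  Units.ext <| ext_iff_mulVec.2 fun x => by
    simp only [symplecticTransvection_mulVec, map_smul, LinearMap.smul_apply, smul_eq_mul,
      smul_smul]
    ring_nf

theorem symplecticTransvection_mem_symplecticGroup (v : ι ⊕ ι → R) (t : R) :
    (T v t : Matrix (ι ⊕ ι) (ι ⊕ ι) R) ∈ symplecticGroup ι R := by
  refine mem_symplecticGroup_iff_symplecticForm.2 fun x y => ?_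
  simp only [symplecticTransvection_mulVec, map_add, map_smul, LinearMap.add_apply,
    LinearMap.smul_apply, smul_eq_mul, symplecticForm_self, symplecticForm_swap v x]
  ring

theorem conj_symplecticTransvection {P : (Matrix (ι ⊕ ι) (ι ⊕ ι) R)ˣ}
    (hP : (P : Matrix (ι ⊕ ι) (ι ⊕ ι) R) ∈ symplecticGroup ι R) (v : ι ⊕ ι → R) (t : R) :
    P * T v t * P⁻¹ = T ((P : Matrix (ι ⊕ ι) (ι ⊕ ι) R) *ᵥ v) t := by
  refine Units.ext <| ext_iff_mulVec.2 fun x => ?_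
  have hPx : (P : Matrix (ι ⊕ ι) (ι ⊕ ι) R) *ᵥ (↑P⁻¹ *ᵥ x) = x := by
    rw [mulVec_mulVec, P.mul_inv, one_mulVec]
  have hx : ω (↑P *ᵥ v) x = ω v (↑P⁻¹ *ᵥ x) := by
    rw [← mem_symplecticGroup_iff_symplecticForm.1 hP v, hPx]
  rw [Units.val_mul, Units.val_mul, ← mulVec_mulVec, ← mulVec_mulVec,
    symplecticTransvection_mulVec, mulVec_add, mulVec_smul, hPx, symplecticTransvection_mulVec, hx]

def stdBasisOutside {ι R : Type*} [DecidableEq ι] [Zero R] [One R] (i₀ : ι) (s : Finset ι) :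
    Set (ι ⊕ ι → R) :=
  insert (Pi.single (Sum.inl i₀) 1)
    {y | ∃ l ∉ s, y = Pi.single (Sum.inl l) 1 ∨ y = Pi.single (Sum.inr l) 1}

theorem stdBasisOutside_subset_insert {ι R : Type*} [DecidableEq ι] [Zero R] [One R]
    (i₀ κ : ι) (s : Finset ι) :
    (stdBasisOutside i₀ s : Set (ι ⊕ ι → R)) ⊆ insert (Pi.single (Sum.inr κ) 1)
      (insert (Pi.single (Sum.inl κ) 1) (stdBasisOutside i₀ (insert κ s))) := by
  rintro y (rfl | ⟨l, hl, hy⟩)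
  · exact Or.inr (Or.inr (Set.mem_insert _ _))
  rcases eq_or_ne l κ with rfl | hlκ
  · rcases hy with rfl | rfl
    exacts [Or.inr (Or.inl rfl), Or.inl rfl]
  · exact Or.inr (Or.inr (Or.inr ⟨l, by simp [hl, hlκ], hy⟩))

theorem single_inl_mem_symplecticPerp_stdBasisOutside (i₀ κ : ι) (s : Finset ι) :
    (Pi.single (Sum.inl κ) 1 : ι ⊕ ι → R) ∈
      symplecticPerp (stdBasisOutside i₀ (insert κ s)) := by
  refine mem_symplecticPerp.2 ?_
  rintro y (rfl | ⟨l, hl, rfl | rfl⟩) <;>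
    simp_all [symplecticForm_single_inl_left, eq_comm]

theorem single_inr_mem_symplecticPerp_stdBasisOutside {i₀ κ : ι} (hκ : κ ≠ i₀) (s : Finset ι) :
    (Pi.single (Sum.inr κ) 1 : ι ⊕ ι → R) ∈
      symplecticPerp (stdBasisOutside i₀ (insert κ s)) := by
  refine mem_symplecticPerp.2 ?_
  rintro y (rfl | ⟨l, hl, rfl | rfl⟩) <;>
    simp_all [symplecticForm_single_inr_left, eq_comm]

theorem eq_one_of_forall_mem_stdBasisOutside_empty {i₀ : ι} {M : Matrix (ι ⊕ ι) (ι ⊕ ι) R}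
    (h : ∀ y ∈ stdBasisOutside i₀ ∅, M *ᵥ y = y) : M = 1 := by
  refine ext_of_mulVec_single fun j => ?_
  rw [one_mulVec]
  rcases j with l | l
  exacts [h _ (Or.inr ⟨l, Finset.notMem_empty l, Or.inl rfl⟩),
    h _ (Or.inr ⟨l, Finset.notMem_empty l, Or.inr rfl⟩)]

theorem iff_of_forall_update_iff {α : Type*} {P : (ι → α) → Prop}
    (h : ∀ a k y, P (Function.update a k y) ↔ P a) (a a' : ι → α) : P a ↔ P a' := by
  suffices ∀ s : Finset ι, P (s.piecewise a' a) ↔ P a by simpa using (this Finset.univ).symm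
  intro s
  induction s using Finset.induction_on with
  | empty => simp
  | insert k s _ ih => rw [Finset.piecewise_insert, h, ih]

section Field

variable {F : Type*} [Field F]

theorem exists_ne_ne (hF : ∃ x : F, x ≠ 0 ∧ x ≠ 1) (a b : F) : ∃ c, c ≠ a ∧ c ≠ b := by
  obtain ⟨x, hx0, hx1⟩ := hF
  by_contra! h
  rcases eq_or_ne a 0 with rfl | ha0
  · exact hx1 ((h x hx0).trans (h 1 one_ne_zero).symm)
  have hb : 0 = b := h 0 ha0.symm
  rcases eq_or_ne a 1 with rfl | ha1
  · exact hx0 ((h x hx1).trans hb.symm)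
  · exact one_ne_zero ((h 1 ha1.symm).trans hb.symm)

theorem exists_add_mul_ne_zero (hF : ∃ x : F, x ≠ 0 ∧ x ≠ 1) {a₁ a₂ b₁ b₂ : F} (h₁ : a₁ ≠ 0)
    (h₂ : b₂ ≠ 0) : ∃ c, a₁ + c * b₁ ≠ 0 ∧ a₂ + c * b₂ ≠ 0 := by
  obtain ⟨c, hc₁, hc₂⟩ := exists_ne_ne hF (-a₁ / b₁) (-a₂ / b₂)
  refine ⟨c, fun h => ?_, fun h => hc₂ ?_⟩
  · rcases eq_or_ne b₁ 0 with hb | hb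
    · simp [hb, h₁] at h
    · exact hc₁ (by field_simp; linear_combination h)
  · field_simp
    linear_combination h

theorem symplecticTransvection_sub_mulVec {x z : ι ⊕ ι → F} (h : ω z x ≠ 0) :
    (T (z - x) (ω z x)⁻¹ : Matrix (ι ⊕ ι) (ι ⊕ ι) F) *ᵥ x = z := by
  rw [symplecticTransvection_mulVec, map_sub, LinearMap.sub_apply, symplecticForm_self, sub_zero,
    inv_mul_cancel₀ h, one_smul, add_sub_cancel]

/-- `x` is moved to `z` through `y = x + w' + c • w`, with `c` chosen so that `y` pairs
nontrivially with both `x` and `z`. -/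
theorem exists_symplecticTransvection_mul_mulVec_eq (hF : ∃ x : F, x ≠ 0 ∧ x ≠ 1)
    {V : Submodule F (ι ⊕ ι → F)} {x z w w' : ι ⊕ ι → F} (hxz : x - z ∈ V) (hw : w ∈ V)
    (hw' : w' ∈ V) (hxw' : ω x w' ≠ 0) (hzw : ω z w ≠ 0) :
    ∃ v₁ ∈ V, ∃ v₂ ∈ V, ∃ t₁ t₂ : F,
      (↑(T v₂ t₂ * T v₁ t₁) : Matrix (ι ⊕ ι) (ι ⊕ ι) F) *ᵥ x = z := by
  obtain ⟨c, hx, hz⟩ :=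
    exists_add_mul_ne_zero hF (b₁ := ω x w) (a₂ := ω z x + ω z w') hxw' hzw
  set y := x + (w' + c • w)
  have hyx : ω y x ≠ 0 := by
    rw [symplecticForm_swap, neg_ne_zero]
    simpa [y, symplecticForm_self, mul_comm c] using hx
  have hzy : ω z y ≠ 0 := by
    simpa [y, add_assoc, mul_comm c] using hz
  refine ⟨y - x, ?_, z - y, ?_, (ω y x)⁻¹, (ω z y)⁻¹, ?_⟩
  · simpa [y] using V.add_mem hw' (V.smul_mem c hw)
  · have : z - y = -(x - z) - (w' + c • w) := by simp only [y]; abel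
    rw [this]
    exact V.sub_mem (V.neg_mem hxz) (V.add_mem hw' (V.smul_mem c hw))
  · rw [Units.val_mul, ← mulVec_mulVec, symplecticTransvection_sub_mulVec hyx,
      symplecticTransvection_sub_mulVec hzy]

theorem exists_mulVec_single_inl_eq_elim_one_zero (i : ι) :
    ∃ P : (Matrix (ι ⊕ ι) (ι ⊕ ι) F)ˣ, (P : Matrix (ι ⊕ ι) (ι ⊕ ι) F) ∈ symplecticGroup ι F ∧
      (P : Matrix (ι ⊕ ι) (ι ⊕ ι) F) *ᵥ Pi.single (Sum.inl i) 1 =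
        Sum.elim (1 : ι → F) (0 : ι → F) := by
  set x : ι ⊕ ι → F := Pi.single (Sum.inl i) 1
  set y : ι ⊕ ι → F := x + Pi.single (Sum.inr i) 1
  set z : ι ⊕ ι → F := Sum.elim 1 0
  have hyx : ω y x ≠ 0 := by simp [y, x, symplecticForm_single_inr_left, symplecticForm_self]
  have hzy : ω z y ≠ 0 := by
    simp [z, y, x, symplecticForm_single_inl_right, symplecticForm_single_inr_right]
  refine ⟨T (z - y) (ω z y)⁻¹ * T (y - x) (ω y x)⁻¹, ?_, ?_⟩
  · rw [Units.val_mul]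
    exact mul_mem (symplecticTransvection_mem_symplecticGroup _ _)
      (symplecticTransvection_mem_symplecticGroup _ _)
  · rw [Units.val_mul, ← mulVec_mulVec, symplecticTransvection_sub_mulVec hyx,
      symplecticTransvection_sub_mulVec hzy]

variable {G : Subgroup (Matrix (ι ⊕ ι) (ι ⊕ ι) F)ˣ} {S : Set (ι ⊕ ι → F)}
  {A : (Matrix (ι ⊕ ι) (ι ⊕ ι) F)ˣ}

theorem exists_mem_forall_mul_mulVec_eq (hF : ∃ x : F, x ≠ 0 ∧ x ≠ 1)
    (hG : ∀ v ∈ symplecticPerp S, ∀ t, T v t ∈ G)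
    (hA : (A : Matrix (ι ⊕ ι) (ι ⊕ ι) F) ∈ symplecticGroup ι F)
    (hAS : ∀ y ∈ S, (A : Matrix (ι ⊕ ι) (ι ⊕ ι) F) *ᵥ y = y) {z w : ι ⊕ ι → F}
    (hw : w ∈ symplecticPerp S) (hzw : ω z w ≠ 0) :
    ∃ g ∈ G, (↑(g * A) : Matrix (ι ⊕ ι) (ι ⊕ ι) F) ∈ symplecticGroup ι F ∧
      ∀ y ∈ insert z S, (↑(g * A) : Matrix (ι ⊕ ι) (ι ⊕ ι) F) *ᵥ y = y := by
  have hω := mem_symplecticGroup_iff_symplecticForm.1 hA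
  -- `A` fixes `S`, hence preserves `symplecticPerp S`; so `A w` pairs with `A z` as `w` with `z`.
  have hAw : ↑A *ᵥ w ∈ symplecticPerp S := mem_symplecticPerp.2 fun y hy => by
    rw [← hAS y hy, hω, mem_symplecticPerp.1 hw y hy]
  have hAz : ↑A *ᵥ z - z ∈ symplecticPerp S := mem_symplecticPerp.2 fun y hy => by
    rw [map_sub, LinearMap.sub_apply, sub_eq_zero]
    conv_lhs => rw [← hAS y hy]
    exact hω z y
  obtain ⟨v₁, hv₁, v₂, hv₂, t₁, t₂, h⟩ :=
    exists_symplecticTransvection_mul_mulVec_eq hF hAz hw hAw (by rwa [hω]) hzw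
  refine ⟨T v₂ t₂ * T v₁ t₁, mul_mem (hG v₂ hv₂ t₂) (hG v₁ hv₁ t₁), ?_, ?_⟩
  · simp only [Units.val_mul]
    exact mul_mem (mul_mem (symplecticTransvection_mem_symplecticGroup _ _)
      (symplecticTransvection_mem_symplecticGroup _ _)) hA
  rintro y (rfl | hy)
  · rwa [Units.val_mul _ A, ← mulVec_mulVec]
  · rw [Units.val_mul, ← mulVec_mulVec, hAS y hy, Units.val_mul, ← mulVec_mulVec,
      symplecticTransvection_mulVec_of_symplecticForm_eq_zero (mem_symplecticPerp.1 hv₁ y hy),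
      symplecticTransvection_mulVec_of_symplecticForm_eq_zero (mem_symplecticPerp.1 hv₂ y hy)]

theorem exists_mem_forall_mul_mulVec_eq_of_pair (hF : ∃ x : F, x ≠ 0 ∧ x ≠ 1)
    (hG : ∀ v ∈ symplecticPerp S, ∀ t, T v t ∈ G)
    (hA : (A : Matrix (ι ⊕ ι) (ι ⊕ ι) F) ∈ symplecticGroup ι F)
    (hAS : ∀ y ∈ S, (A : Matrix (ι ⊕ ι) (ι ⊕ ι) F) *ᵥ y = y) (k : ι)
    (hS : Pi.single (Sum.inl k) 1 ∈ S ∨ Pi.single (Sum.inr k) 1 ∈ symplecticPerp S)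
    (hperp : Pi.single (Sum.inl k) 1 ∈ symplecticPerp S) :
    ∃ g ∈ G, (↑(g * A) : Matrix (ι ⊕ ι) (ι ⊕ ι) F) ∈ symplecticGroup ι F ∧
      ∀ y ∈ insert (Pi.single (Sum.inr k) 1) (insert (Pi.single (Sum.inl k) 1) S),
        (↑(g * A) : Matrix (ι ⊕ ι) (ι ⊕ ι) F) *ᵥ y = y := by
  obtain ⟨g₁, hg₁, hg₁A, hfix₁⟩ : ∃ g ∈ G,
      (↑(g * A) : Matrix (ι ⊕ ι) (ι ⊕ ι) F) ∈ symplecticGroup ι F ∧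
      ∀ y ∈ insert (Pi.single (Sum.inl k) 1) S, (↑(g * A) : Matrix _ _ F) *ᵥ y = y := by
    rcases hS with hS | hS
    · exact ⟨1, one_mem G, by rwa [one_mul], by rwa [one_mul, Set.insert_eq_of_mem hS]⟩
    · exact exists_mem_forall_mul_mulVec_eq hF hG hA hAS hS
        (by simp [symplecticForm_single_inl_left])
  have hperp' : Pi.single (Sum.inl k) 1 ∈ symplecticPerp (insert (Pi.single (Sum.inl k) 1) S) :=
    mem_symplecticPerp.2 fun y hy => by
      rcases hy with rfl | hy
      exacts [symplecticForm_self _, mem_symplecticPerp.1 hperp y hy]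
  obtain ⟨g₂, hg₂, hg₂A, hfix₂⟩ := exists_mem_forall_mul_mulVec_eq hF
    (fun v hv => hG v (symplecticPerp_anti (Set.subset_insert _ _) hv)) hg₁A hfix₁
    (z := Pi.single (Sum.inr k) 1) hperp' (by simp [symplecticForm_single_inr_left])
  exact ⟨g₂ * g₁, mul_mem hg₂ hg₁, by rwa [mul_assoc], by rwa [mul_assoc]⟩

theorem mem_of_mulVec_single_inl_eq (hF : ∃ x : F, x ≠ 0 ∧ x ≠ 1) (i₀ : ι)
    (hG : ∀ v, ω v (Pi.single (Sum.inl i₀) 1) = 0 → ∀ t, T v t ∈ G)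
    (hA : (A : Matrix (ι ⊕ ι) (ι ⊕ ι) F) ∈ symplecticGroup ι F)
    (hAi₀ : (A : Matrix (ι ⊕ ι) (ι ⊕ ι) F) *ᵥ Pi.single (Sum.inl i₀) 1 =
      Pi.single (Sum.inl i₀) 1) :
    A ∈ G := by
  suffices key : ∀ s : Finset ι, ∀ A : (Matrix (ι ⊕ ι) (ι ⊕ ι) F)ˣ,
      (A : Matrix (ι ⊕ ι) (ι ⊕ ι) F) ∈ symplecticGroup ι F →
      (∀ y ∈ stdBasisOutside i₀ s, (A : Matrix (ι ⊕ ι) (ι ⊕ ι) F) *ᵥ y = y) → A ∈ G by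
    refine key Finset.univ A hA ?_
    rintro y (rfl | ⟨l, hl, -⟩)
    exacts [hAi₀, absurd (Finset.mem_univ l) hl]
  intro s
  induction s using Finset.induction_on with
  | empty =>
    intro A _ hfix
    convert one_mem G
    exact Units.ext (eq_one_of_forall_mem_stdBasisOutside_empty hfix)
  | insert κ s _ ih =>
    intro A hA hfix
    have hS : (Pi.single (Sum.inl κ) 1 : ι ⊕ ι → F) ∈ stdBasisOutside i₀ (insert κ s) ∨
        (Pi.single (Sum.inr κ) 1 : ι ⊕ ι → F) ∈
          symplecticPerp (stdBasisOutside i₀ (insert κ s)) := by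
      by_cases hκ : κ = i₀
      exacts [Or.inl (hκ ▸ Set.mem_insert _ _),
        Or.inr (single_inr_mem_symplecticPerp_stdBasisOutside hκ s)]
    obtain ⟨g, hg, hgA, hfix'⟩ := exists_mem_forall_mul_mulVec_eq_of_pair hF
      (fun v hv => hG v (mem_symplecticPerp.1 hv _ (Set.mem_insert _ _))) hA hfix κ hS
      (single_inl_mem_symplecticPerp_stdBasisOutside i₀ κ s)
    have := ih (g * A) hgA fun y hy => hfix' y (stdBasisOutside_subset_insert i₀ κ s hy)
    simpa using mul_mem (inv_mem hg) this

end Field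

section Directions

variable {F : Type*} [Field F] {n : ℕ}

def IsELDirection (v : Fin n ⊕ Fin n → F) : Prop :=
  ∀ t, T v t ∈ EL F n

theorem symplecticTransvection_single_inl (k : Fin n) (t : F) :
    (T (Pi.single (Sum.inl k) 1) t : Matrix (Fin n ⊕ Fin n) (Fin n ⊕ Fin n) F) = XiD k (-t) := by
  ext (i | i) (j | j) <;>
    simp [symplecticTransvection, XiD, J, vecMulVec_apply, Pi.single_apply, one_apply,
      single_apply]
  grind

theorem symplecticTransvection_single_inr_sub_single_inr (i j : Fin n) (t : F) :
    (T (Pi.single (Sum.inr i) 1 - Pi.single (Sum.inr j) 1) t :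
      Matrix (Fin n ⊕ Fin n) (Fin n ⊕ Fin n) F) = XiOff i j t := by
  ext (k | k) (l | l) <;>
    simp [symplecticTransvection, XiOff, J, vecMulVec_apply, Pi.single_apply, one_apply,
      single_apply, vecMul, dotProduct]
  grind

theorem isELDirection_single_inl (k : Fin n) :
    IsELDirection (Pi.single (Sum.inl k) 1 : Fin n ⊕ Fin n → F) := fun t =>
  Subgroup.subset_closure (Or.inl ⟨k, -t, symplecticTransvection_single_inl k t⟩)

theorem isELDirection_single_inr_sub_single_inr {i j : Fin n} (hij : i ≠ j) :
    IsELDirection (Pi.single (Sum.inr i) 1 - Pi.single (Sum.inr j) 1 : Fin n ⊕ Fin n → F) :=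
  fun t => Subgroup.subset_closure
    (Or.inr ⟨i, j, t, hij, symplecticTransvection_single_inr_sub_single_inr i j t⟩)

theorem isELDirection_zero : IsELDirection (0 : Fin n ⊕ Fin n → F) := fun t => by
  rw [symplecticTransvection_zero_left]
  exact one_mem _

theorem IsELDirection.smul {v : Fin n ⊕ Fin n → F} (hv : IsELDirection v) (c : F) :
    IsELDirection (c • v) := fun t => by
  rw [symplecticTransvection_smul]
  exact hv _

theorem IsELDirection.mulVec {v : Fin n ⊕ Fin n → F} (hv : IsELDirection v)
    {P : (Matrix (Fin n ⊕ Fin n) (Fin n ⊕ Fin n) F)ˣ}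
    (hP : (P : Matrix (Fin n ⊕ Fin n) (Fin n ⊕ Fin n) F) ∈ symplecticGroup (Fin n) F)
    (hPEL : P ∈ EL F n) :
    IsELDirection ((P : Matrix (Fin n ⊕ Fin n) (Fin n ⊕ Fin n) F) *ᵥ v) := fun t => by
  rw [← conj_symplecticTransvection hP]
  exact mul_mem (mul_mem hPEL (hv t)) (inv_mem hPEL)

theorem IsELDirection.add_smul {u v : Fin n ⊕ Fin n → F} (hv : IsELDirection v)
    (hu : IsELDirection u) (h : ω u v ≠ 0) (c : F) : IsELDirection (v + c • u) := by
  have := hv.mulVec (symplecticTransvection_mem_symplecticGroup u (c / ω u v)) (hu _)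
  rwa [symplecticTransvection_mulVec, div_mul_cancel₀ c h] at this

theorem isELDirection_add_smul_iff {u v : Fin n ⊕ Fin n → F} (hu : IsELDirection u)
    (h : ω u v ≠ 0) (c : F) : IsELDirection (v + c • u) ↔ IsELDirection v := by
  refine ⟨fun hvc => ?_, fun hv => hv.add_smul hu h c⟩
  have h' : ω u (v + c • u) ≠ 0 := by simpa [symplecticForm_self] using h
  simpa using hvc.add_smul hu h' (-c)

/-- Eichler's identity `T(u + w, s x) = T(u, s x - s) T(u + x w, s) T(w, s x - s x²)`,
valid when `ω(u, w) = 0`. -/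
theorem IsELDirection.add {u w : Fin n ⊕ Fin n → F} {x : F} (hx : x ≠ 0)
    (hu : IsELDirection u) (hw : IsELDirection w) (huw : IsELDirection (u + x • w))
    (h : ω u w = 0) : IsELDirection (u + w) := by
  intro t
  obtain ⟨s, rfl⟩ : ∃ s, t = s * x := ⟨t / x, (div_mul_cancel₀ t hx).symm⟩
  have key : T (u + w) (s * x) = T u (s * x - s) * T (u + x • w) s * T w (s * x - s * x * x) := by
    refine Units.ext <| ext_iff_mulVec.2 fun y => ?_
    simp only [Units.val_mul, ← mulVec_mulVec, symplecticTransvection_mulVec, map_add, map_smul,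
      LinearMap.add_apply, LinearMap.smul_apply, smul_eq_mul, symplecticForm_self, h]
    module
  rw [key]
  exact mul_mem (mul_mem (hu _) (huw _)) (hw _)

theorem isELDirection_elim_update_iff {a b : Fin n → F} {k : Fin n} (hb : b k ≠ 0) (y : F) :
    IsELDirection (Sum.elim (Function.update a k y) b) ↔ IsELDirection (Sum.elim a b) := by
  have : Sum.elim (Function.update a k y) b
      = Sum.elim a b + (y - a k) • Pi.single (Sum.inl k) 1 := by
    ext (l | l) <;> by_cases hl : l = k <;> simp [hl]
  rw [this]
  exact isELDirection_add_smul_iff (isELDirection_single_inl k)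
    (by simpa [symplecticForm_single_inl_left] using hb) _

theorem isELDirection_elim_add_iff {a b : Fin n → F} {i j : Fin n} (hij : a i ≠ a j) (c : F) :
    IsELDirection (Sum.elim a (b + c • (Pi.single i 1 - Pi.single j 1))) ↔
      IsELDirection (Sum.elim a b) := by
  have : Sum.elim a (b + c • (Pi.single i 1 - Pi.single j 1))
      = Sum.elim a b + c • (Pi.single (Sum.inr i) 1 - Pi.single (Sum.inr j) 1) := by
    ext (l | l) <;> simp [Pi.single_apply]
  rw [this]
  exact isELDirection_add_smul_iff
    (isELDirection_single_inr_sub_single_inr (ne_of_apply_ne a hij))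
    (by simpa [symplecticForm_single_inr_left, sub_eq_zero] using hij) c

theorem isELDirection_elim_single (i : Fin n) {b : Fin n → F} (hb : ∑ k, b k = 0) :
    IsELDirection (Sum.elim (Pi.single i 1) b) := by
  have hb' : b = ∑ k, b k • (Pi.single k 1 - Pi.single i 1) := by
    ext l
    simp [Finset.sum_apply, Pi.single_apply, mul_sub, Finset.sum_sub_distrib, hb]
  rw [hb']
  induction (Finset.univ : Finset (Fin n)) using Finset.induction_on with
  | empty => simpa using isELDirection_single_inl i
  | insert k s hk ih =>
    rw [Finset.sum_insert hk, add_comm]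
    rcases eq_or_ne k i with rfl | hki
    · simpa using ih
    · exact (isELDirection_elim_add_iff (by simp [hki]) _).2 ih

theorem isELDirection_elim_of_forall_ne_zero [NeZero n] {b : Fin n → F} (hb : ∀ k, b k ≠ 0)
    (hsum : ∑ k, b k = 0) (a : Fin n → F) : IsELDirection (Sum.elim a b) :=
  (iff_of_forall_update_iff (P := fun a => IsELDirection (Sum.elim a b))
    (fun _ k y => isELDirection_elim_update_iff (hb k) y) _ _).2 (isELDirection_elim_single 0 hsum)

theorem isELDirection_elim_of_ne (hF : ∃ x : F, x ≠ 0 ∧ x ≠ 1) [NeZero n] {a b : Fin n → F}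
    {i j : Fin n} (hij : a i ≠ a j) (hsum : ∑ k, b k = 0) : IsELDirection (Sum.elim a b) := by
  -- Moves along `fₖ - fₗ` with `aₖ ≠ aₗ` make the zero coordinates of `b` nonzero one by one.
  suffices ∀ s : Finset (Fin n), ∀ b : Fin n → F, ∑ k, b k = 0 → (∀ k ∉ s, b k ≠ 0) →
      IsELDirection (Sum.elim a b) from this Finset.univ b hsum (by simp)
  intro s
  induction s using Finset.induction_on with
  | empty =>
    intro b hsum hb
    exact isELDirection_elim_of_forall_ne_zero (fun k => hb k (Finset.notMem_empty k)) hsum a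
  | insert k s hk ih =>
    intro b hsum hb
    by_cases hbk : b k ≠ 0
    · refine ih b hsum fun l hl => ?_
      by_cases hlk : l = k
      exacts [hlk ▸ hbk, hb l (by simp [hl, hlk])]
    push Not at hbk
    obtain ⟨l, hl⟩ : ∃ l, a l ≠ a k := by
      by_cases h : a i = a k
      exacts [⟨j, fun h' => hij (h.trans h'.symm)⟩, ⟨i, h⟩]
    have hlk : l ≠ k := ne_of_apply_ne a hl
    obtain ⟨c, hc₀, hcl⟩ := exists_ne_ne hF 0 (b l)
    rw [← isELDirection_elim_add_iff hl.symm c]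
    refine ih _ (by simp [Finset.sum_add_distrib, Finset.sum_sub_distrib, ← Finset.mul_sum, hsum])
      fun m hm => ?_
    rcases eq_or_ne m k with rfl | hmk
    · simpa [hbk, hlk.symm] using hc₀
    rcases eq_or_ne m l with rfl | hml
    · simpa [hmk, ← sub_eq_add_neg, sub_eq_zero] using hcl.symm
    · simpa [hmk, hml] using hb m (by simp [hm, hmk])

theorem isELDirection_elim_of_ne_zero (hF : ∃ x : F, x ≠ 0 ∧ x ≠ 1) [NeZero n] {b : Fin n → F}
    (hb : b ≠ 0) (hsum : ∑ k, b k = 0) (a : Fin n → F) : IsELDirection (Sum.elim a b) := by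
  obtain ⟨k, hk⟩ : ∃ k, b k ≠ 0 := Function.ne_iff.1 hb
  obtain ⟨j, hjk⟩ : ∃ j, j ≠ k := by
    by_contra! h
    rw [Finset.sum_eq_single k (fun l _ hl => absurd (h l) hl) (by simp)] at hsum
    exact hk hsum
  rw [← isELDirection_elim_update_iff hk (a j + 1)]
  exact isELDirection_elim_of_ne hF (i := k) (j := j) (by simp [hjk]) hsum

theorem isELDirection_elim_const (hF : ∃ x : F, x ≠ 0 ∧ x ≠ 1) [NeZero n] (c : F) :
    IsELDirection (Sum.elim (fun _ => c) (0 : Fin n → F)) := by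
  obtain ⟨x, hx₀, hx₁⟩ := id hF
  rcases eq_or_ne c 0 with rfl | hc
  · rw [show (fun _ => (0 : F)) = 0 from rfl, Sum.elim_zero_zero]
    exact isELDirection_zero
  by_cases hn : ∃ j : Fin n, j ≠ 0
  swap
  · push Not at hn
    have : Sum.elim (fun _ => c) (0 : Fin n → F) =
        c • (Pi.single (Sum.inl 0) 1 : Fin n ⊕ Fin n → F) := by
      ext (l | l) <;> simp [hn l]
    rw [this]
    exact (isELDirection_single_inl 0).smul c
  obtain ⟨j, hj⟩ := hn
  set u : Fin n ⊕ Fin n → F := Sum.elim (Pi.single 0 c) 0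
  set w : Fin n ⊕ Fin n → F := Sum.elim ((fun _ => c) - Pi.single 0 c) 0
  have hu : IsELDirection u := by
    simpa [u, ← Pi.single_smul] using (isELDirection_single_inl 0).smul c
  have hw : IsELDirection w :=
    isELDirection_elim_of_ne hF (i := 0) (j := j) (by simp [hj, Ne.symm hc]) (by simp)
  have huw : IsELDirection (u + x • w) := by
    have := isELDirection_elim_of_ne hF (a := Pi.single 0 c + x • ((fun _ => c) - Pi.single 0 c))
      (b := (0 : Fin n → F)) (i := 0) (j := j) (by simp [hj, hc, hx₁]) (by simp)
    convert this using 1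
    ext (l | l) <;> simp [u, w, Pi.single_apply]
  convert hu.add hx₀ hw huw (by simp only [u, w, symplecticForm_elim, dotProduct_zero,
    zero_dotProduct, sub_zero]) using 1
  ext (l | l) <;> simp [u, w, Pi.single_apply]

theorem isELDirection_of_symplecticForm_eq_zero (hF : ∃ x : F, x ≠ 0 ∧ x ≠ 1) [NeZero n]
    {v : Fin n ⊕ Fin n → F} (hv : ω v (Sum.elim 1 0) = 0) : IsELDirection v := by
  obtain ⟨a, b, rfl⟩ : ∃ a b, v = Sum.elim a b :=
    ⟨v ∘ Sum.inl, v ∘ Sum.inr, (Sum.elim_comp_inl_inr v).symm⟩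
  have hsum : ∑ k, b k = 0 := by simpa [symplecticForm_elim, dotProduct] using hv
  rcases eq_or_ne b 0 with rfl | hb
  · by_cases h : ∃ i j, a i ≠ a j
    · obtain ⟨i, j, hij⟩ := h
      exact isELDirection_elim_of_ne hF hij (by simp)
    · push Not at h
      rw [show a = fun _ => a 0 from funext fun i => h i 0]
      exact isELDirection_elim_const hF _
  · exact isELDirection_elim_of_ne_zero hF hb hsum _

end Directions

end ElectricalLinearGroup

open Matrix SymplecticGroup ElectricalLinearGroup in
/-- If `F ≠ F₂` (i.e. `F` has an element other than `0` and `1`), then every symplectic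
`2n × 2n` matrix over `F` fixing `c₀ = (1,…,1,0,…,0)` lies in the electrical linear group;
consequently `EL_n(F)` is exactly the group of symplectic matrices fixing `c₀`. -/
theorem stmt10 {F : Type*} [Field F] {n : ℕ} (hn : 0 < n)
    (hF : ∃ x : F, x ≠ 0 ∧ x ≠ 1)
    (A : Matrix (Fin n ⊕ Fin n) (Fin n ⊕ Fin n) F)
    (hsymp : Aᵀ * OmegaMat F n * A = OmegaMat F n)
    (hfix : A.mulVec (Sum.elim (1 : Fin n → F) (0 : Fin n → F))
      = Sum.elim (1 : Fin n → F) (0 : Fin n → F)) :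
    ∃ B ∈ EL F n, (B : Matrix (Fin n ⊕ Fin n) (Fin n ⊕ Fin n) F) = A := by
  have : NeZero n := ⟨hn.ne'⟩
  -- `OmegaMat F n` is `J (Fin n) F` by definition.
  have hA : A ∈ symplecticGroup (Fin n) F := mem_iff'.2 hsymp
  obtain ⟨P, hP, hPe⟩ := exists_mulVec_single_inl_eq_elim_one_zero (F := F) (0 : Fin n)
  set U := ((isUnit_iff_isUnit_det A).2 (symplectic_det hA)).unit
  have hU : (U : Matrix (Fin n ⊕ Fin n) (Fin n ⊕ Fin n) F) = A := IsUnit.unit_spec _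
  refine ⟨U, ?_, hU⟩
  have hB : P⁻¹ * U * P ∈ (EL F n).comap (MulAut.conj P).toMonoidHom := by
    refine mem_of_mulVec_single_inl_eq hF 0 (fun v hv t => ?_) ?_ ?_
    · change P * symplecticTransvection v t * P⁻¹ ∈ EL F n
      rw [conj_symplecticTransvection hP]
      refine isELDirection_of_symplecticForm_eq_zero hF ?_ t
      rwa [← hPe, mem_symplecticGroup_iff_symplecticForm.1 hP]
    · rw [Units.val_mul, Units.val_mul, hU]
      exact mul_mem (mul_mem (units_inv_mem_symplecticGroup hP) hA) hP
    · rw [Units.val_mul, Units.val_mul, hU, ← mulVec_mulVec, ← mulVec_mulVec, hPe, hfix, ← hPe,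
        mulVec_mulVec, P.inv_mul, one_mulVec]
  simpa [mul_assoc] using hB
end

section
/- Let F be a field with more than two elements (F ≠ F₂) and n a positive integer. Then the electrical linear group EL_n(F) is generated by the matrices Ξ_j(t) for j = 1,…,n and Ξ_{j,j+1}(t) for j = 1,…,n−1, with t ranging over F; i.e., the subgroup of GL_{2n}(F) generated by this smaller set of matrices equals the subgroup generated by all Ξ_j(t) and all Ξ_{i,j}(t) with i ≠ j. -/
open Module

/-- The "circular planar" generating set: `Ξ_j(t)` for all `j`, and `Ξ_{j,j+1}(t)` for
consecutive indices. -/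
def ELGenAdj (F : Type*) [Field F] (n : ℕ) :
    Set ((Matrix (Fin n ⊕ Fin n) (Fin n ⊕ Fin n) F)ˣ) :=
  {A | (∃ j t, (A : Matrix (Fin n ⊕ Fin n) (Fin n ⊕ Fin n) F) = XiD j t) ∨
       (∃ (i j : Fin n) (t : F), (i : ℕ) + 1 = (j : ℕ) ∧
         (A : Matrix (Fin n ⊕ Fin n) (Fin n ⊕ Fin n) F) = XiOff i j t)}

/-!
Write `e_k` for the standard basis vectors. Every `Ξ_{i,j}(t)` is the lower block unipotent
matrix `[[I, 0], [t vvᵀ, I]]` with `v = e_i - e_j`. A product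
`Ξ_i(a) Ξ_{i,i'}(1) Ξ_i(a')` with `a + a' + a a' = 0` is block lower triangular
`[[P, 0], [C, Q]]` with `Qᵀ P = I`, so conjugating by it acts on the lower left block of
`[[I, 0], [L, I]]` as `L ↦ Q L Qᵀ`, i.e. on `v` as `v ↦ Q v`. Such a `Q` multiplies the
`i`-th coordinate of `v` by `1 + a'` and compensates in the `i'`-th one. With a scalar
`x ∉ {0, 1}`, two of these moves, one at `i' = i + 1` with factor `x` and one at `i` with
factor `(1 - x)⁻¹`, send `e_{i+1} - e_j` to `e_i - e_j`. Hence `Ξ_{i,j}(t)` is a conjugate of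
`Ξ_{i+1,j}(t)` by adjacent generators, and induction on `j - i` finishes the proof.
-/

open Matrix

section BlockUnipotent

variable {R m : Type*} [CommRing R]

def edgeVec [DecidableEq m] (i j : m) : m → R := Pi.single i 1 - Pi.single j 1

theorem vecMulVec_edgeVec_comm [DecidableEq m] (i j : m) :
    vecMulVec (edgeVec i j : m → R) (edgeVec i j) = vecMulVec (edgeVec j i) (edgeVec j i) := by
  rw [show (edgeVec j i : m → R) = -edgeVec i j from (neg_sub _ _).symm, neg_vecMulVec,
    vecMulVec_neg, neg_neg]

variable [Fintype m]

theorem single_dotProduct_edgeVec [DecidableEq m] {i j : m} (h : i ≠ j) :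
    Pi.single i 1 ⬝ᵥ (edgeVec i j : m → R) = 1 := by
  simp [edgeVec, h]

theorem mul_vecMulVec_self_mul_transpose (M : Matrix m m R) (v : m → R) :
    M * vecMulVec v v * Mᵀ = vecMulVec (M *ᵥ v) (M *ᵥ v) := by
  rw [mul_vecMulVec, vecMulVec_mul, vecMul_transpose]

variable [DecidableEq m]

def lowerUnipotent (L : Matrix m m R) : (Matrix (m ⊕ m) (m ⊕ m) R)ˣ where
  val := fromBlocks 1 0 L 1
  inv := fromBlocks 1 0 (-L) 1
  val_inv := by simp [fromBlocks_multiply, ← fromBlocks_one]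
  inv_val := by simp [fromBlocks_multiply, ← fromBlocks_one]

def upperUnipotent (U : Matrix m m R) : (Matrix (m ⊕ m) (m ⊕ m) R)ˣ where
  val := fromBlocks 1 U 0 1
  inv := fromBlocks 1 (-U) 0 1
  val_inv := by simp [fromBlocks_multiply, ← fromBlocks_one]
  inv_val := by simp [fromBlocks_multiply, ← fromBlocks_one]

theorem fromBlocks_mul_lowerUnipotent {P C Q : Matrix m m R} (hQP : Qᵀ * P = 1)
    (L : Matrix m m R) :
    fromBlocks P 0 C Q * lowerUnipotent L
      = lowerUnipotent (Q * L * Qᵀ) * fromBlocks P 0 C Q := by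
  simp [lowerUnipotent, fromBlocks_multiply, Matrix.mul_assoc, hQP, add_comm]

theorem upperUnipotent_mul_lowerUnipotent_mul_upperUnipotent {e w : m → R}
    (hew : e ⬝ᵥ w = 1) {a a' : R} (haa' : a + a' + a * a' = 0) :
    ((upperUnipotent (a • vecMulVec e e) * lowerUnipotent (vecMulVec w w)
        * upperUnipotent (a' • vecMulVec e e) : (Matrix (m ⊕ m) (m ⊕ m) R)ˣ) : Matrix _ _ R)
      = fromBlocks (1 + a • vecMulVec e w) 0 (vecMulVec w w) (1 + a' • vecMulVec w e) := by
  have hwe : w ⬝ᵥ e = 1 := dotProduct_comm w e ▸ hew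
  simp only [upperUnipotent, lowerUnipotent, Units.val_mul, fromBlocks_multiply]
  simp [add_mul, vecMulVec_mul_vecMulVec, hew, hwe, add_comm]
  linear_combination (norm := module) haa' • vecMulVec e e

theorem upperUnipotent_mul_lowerUnipotent_mul_upperUnipotent_conj {e w : m → R}
    (hew : e ⬝ᵥ w = 1) {a a' : R} (haa' : a + a' + a * a' = 0) (t : R) (v : m → R) :
    upperUnipotent (a • vecMulVec e e) * lowerUnipotent (vecMulVec w w)
        * upperUnipotent (a' • vecMulVec e e) * lowerUnipotent (t • vecMulVec v v)
      = lowerUnipotent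
          (t • vecMulVec (v + (a' * (e ⬝ᵥ v)) • w) (v + (a' * (e ⬝ᵥ v)) • w))
        * (upperUnipotent (a • vecMulVec e e) * lowerUnipotent (vecMulVec w w)
          * upperUnipotent (a' • vecMulVec e e)) := by
  have hwe : w ⬝ᵥ e = 1 := dotProduct_comm w e ▸ hew
  have hQP : (1 + a' • vecMulVec w e)ᵀ * (1 + a • vecMulVec e w) = 1 := by
    simp [add_mul, mul_add, vecMulVec_mul_vecMulVec, hwe]
    linear_combination (norm := module) haa' • vecMulVec e w
  have hQv : (1 + a' • vecMulVec w e) *ᵥ v = v + (a' * (e ⬝ᵥ v)) • w := by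
    simp [add_mulVec, smul_mulVec, vecMulVec_mulVec, mul_smul]
  ext1
  rw [Units.val_mul, Units.val_mul _ (_ * _),
    upperUnipotent_mul_lowerUnipotent_mul_upperUnipotent hew haa',
    fromBlocks_mul_lowerUnipotent hQP, Matrix.mul_smul, Matrix.smul_mul,
    mul_vecMulVec_self_mul_transpose, hQv]

end BlockUnipotent

section Conjugation

variable {F m : Type*} [Field F] [Fintype m] [DecidableEq m]

theorem lowerUnipotent_edgeVec_mem_of_mem {H : Subgroup (Matrix (m ⊕ m) (m ⊕ m) F)ˣ}
    {i i' j : m} (hii' : i ≠ i') (hij : i ≠ j) (hi'j : i' ≠ j) {x : F} (hx0 : x ≠ 0)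
    (hx1 : x ≠ 1)
    (hDi : ∀ s : F, upperUnipotent (s • vecMulVec (Pi.single i 1) (Pi.single i 1)) ∈ H)
    (hDi' : ∀ s : F, upperUnipotent (s • vecMulVec (Pi.single i' 1) (Pi.single i' 1)) ∈ H)
    (hOff : lowerUnipotent (vecMulVec (edgeVec i i') (edgeVec i i' : m → F)) ∈ H) {t : F}
    (h : lowerUnipotent (t • vecMulVec (edgeVec i' j) (edgeVec i' j : m → F)) ∈ H) :
    lowerUnipotent (t • vecMulVec (edgeVec i j) (edgeVec i j : m → F)) ∈ H := by
  have hx1' : 1 - x ≠ 0 := sub_ne_zero.mpr (Ne.symm hx1)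
  set g₁ := upperUnipotent ((-x) • vecMulVec (Pi.single i 1) (Pi.single i 1))
    * lowerUnipotent (vecMulVec (edgeVec i i') (edgeVec i i' : m → F))
    * upperUnipotent (((1 - x)⁻¹ - 1) • vecMulVec (Pi.single i 1) (Pi.single i 1))
  set g₂ := upperUnipotent ((x⁻¹ - 1) • vecMulVec (Pi.single i' 1) (Pi.single i' 1))
    * lowerUnipotent (vecMulVec (edgeVec i' i) (edgeVec i' i : m → F))
    * upperUnipotent ((x - 1) • vecMulVec (Pi.single i' 1) (Pi.single i' 1))
  have hg₁ : g₁ ∈ H := mul_mem (mul_mem (hDi _) hOff) (hDi _)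
  have hg₂ : g₂ ∈ H :=
    mul_mem (mul_mem (hDi' _) (vecMulVec_edgeVec_comm (R := F) i i' ▸ hOff)) (hDi' _)
  have hv₁ : Pi.single i' 1 ⬝ᵥ (edgeVec i' j : m → F) = 1 := single_dotProduct_edgeVec hi'j
  have hv₂ :
      Pi.single i 1 ⬝ᵥ (edgeVec i' j + ((x - 1) * 1) • edgeVec i' i : m → F) = 1 - x := by
    simp [edgeVec, hii', hij]
  have hconj : g₁ * g₂ * lowerUnipotent (t • vecMulVec (edgeVec i' j) (edgeVec i' j))
      = lowerUnipotent (t • vecMulVec (edgeVec i j) (edgeVec i j)) * (g₁ * g₂) := by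
    rw [mul_assoc, upperUnipotent_mul_lowerUnipotent_mul_upperUnipotent_conj
      (single_dotProduct_edgeVec hii'.symm) (a := x⁻¹ - 1) (a' := x - 1) (by field_simp; ring),
      ← mul_assoc, upperUnipotent_mul_lowerUnipotent_mul_upperUnipotent_conj
      (single_dotProduct_edgeVec hii') (a := -x) (a' := (1 - x)⁻¹ - 1) (by field_simp; ring),
      mul_assoc, hv₁, hv₂, show ((1 - x)⁻¹ - 1) * (1 - x) = x by field_simp; ring]
    congr 4 <;> simp only [edgeVec] <;> module
  rw [eq_mul_inv_of_mul_eq hconj.symm]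
  exact mul_mem (mul_mem (mul_mem hg₁ hg₂) h) (inv_mem (mul_mem hg₁ hg₂))

end Conjugation

section ElectricalLinearGroup

variable {F : Type*} [Field F] {n : ℕ}

theorem XiD_eq_upperUnipotent (j : Fin n) (t : F) :
    XiD j t = (upperUnipotent (t • vecMulVec (Pi.single j 1 : Fin n → F) (Pi.single j 1)) :
      Matrix _ _ F) := by
  rw [XiD, ← single_eq_single_vecMulVec_single, smul_single, smul_eq_mul, mul_one]
  rfl

theorem XiOff_eq_lowerUnipotent (i j : Fin n) (t : F) :
    XiOff i j t = (lowerUnipotent (t • vecMulVec (edgeVec i j : Fin n → F) (edgeVec i j)) :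
      Matrix _ _ F) := by
  rw [XiOff, edgeVec, vecMulVec_sub, sub_vecMulVec, sub_vecMulVec]
  simp only [← single_eq_single_vecMulVec_single]
  congr 2
  abel

theorem ELGenAdj_subset_ELGen : ELGenAdj F n ⊆ ELGen F n := by
  rintro A (hD | ⟨i, j, t, hij, hA⟩)
  · exact Or.inl hD
  · exact Or.inr ⟨i, j, t, Fin.ne_of_val_ne (by omega), hA⟩

theorem upperUnipotent_single_mem_closure_ELGenAdj (j : Fin n) (t : F) :
    upperUnipotent (t • vecMulVec (Pi.single j 1) (Pi.single j 1))
      ∈ Subgroup.closure (ELGenAdj F n) :=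
  Subgroup.subset_closure (Or.inl ⟨j, t, (XiD_eq_upperUnipotent j t).symm⟩)

theorem lowerUnipotent_edgeVec_mem_closure_ELGenAdj_of_succ {i j : Fin n}
    (hij : (i : ℕ) + 1 = j) (t : F) :
    lowerUnipotent (t • vecMulVec (edgeVec i j) (edgeVec i j))
      ∈ Subgroup.closure (ELGenAdj F n) :=
  Subgroup.subset_closure (Or.inr ⟨i, j, t, hij, (XiOff_eq_lowerUnipotent i j t).symm⟩)

theorem lowerUnipotent_edgeVec_mem_closure_ELGenAdj_of_lt {x : F} (hx0 : x ≠ 0) (hx1 : x ≠ 1)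
    {i j : Fin n} (hij : i < j) (t : F) :
    lowerUnipotent (t • vecMulVec (edgeVec i j) (edgeVec i j))
      ∈ Subgroup.closure (ELGenAdj F n) := by
  obtain ⟨d, hd⟩ : ∃ d, (i : ℕ) + d + 1 = j := ⟨j - i - 1, by omega⟩
  induction d generalizing i with
  | zero => exact lowerUnipotent_edgeVec_mem_closure_ELGenAdj_of_succ hd t
  | succ d ih =>
    let i' : Fin n := ⟨i + 1, by omega⟩
    have hi' : (i : ℕ) + 1 = i' := rfl
    refine lowerUnipotent_edgeVec_mem_of_mem (Fin.ne_of_val_ne (by omega))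
      (Fin.ne_of_val_ne (by omega)) (Fin.ne_of_val_ne (by omega)) hx0 hx1
      (upperUnipotent_single_mem_closure_ELGenAdj i)
      (upperUnipotent_single_mem_closure_ELGenAdj i')
      ?_ (ih (Fin.lt_def.mpr (by omega)) (by omega))
    simpa only [one_smul] using lowerUnipotent_edgeVec_mem_closure_ELGenAdj_of_succ hi' (1 : F)

end ElectricalLinearGroup

theorem stmt13_general {F : Type*} [Field F] {n : ℕ}
    (hF : ∃ x : F, x ≠ 0 ∧ x ≠ 1) :
    Subgroup.closure (ELGenAdj F n) = EL F n := by
  obtain ⟨x, hx0, hx1⟩ := hF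
  refine le_antisymm (Subgroup.closure_mono ELGenAdj_subset_ELGen)
    ((Subgroup.closure_le _).mpr ?_)
  rintro A (⟨j, t, hA⟩ | ⟨i, j, t, hij, hA⟩)
  · exact Subgroup.subset_closure (Or.inl ⟨j, t, hA⟩)
  · rw [Units.ext (hA.trans (XiOff_eq_lowerUnipotent i j t))]
    rcases hij.lt_or_gt with h | h
    · exact lowerUnipotent_edgeVec_mem_closure_ELGenAdj_of_lt hx0 hx1 h t
    · rw [vecMulVec_edgeVec_comm]
      exact lowerUnipotent_edgeVec_mem_closure_ELGenAdj_of_lt hx0 hx1 h t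

/-- For `F ≠ F₂`, the electrical linear group `EL_n(F)` is generated by the matrices
`Ξ_j(t)` for `1 ≤ j ≤ n` and `Ξ_{j,j+1}(t)` for `1 ≤ j ≤ n−1`. -/
theorem stmt13 {F : Type*} [Field F] {n : ℕ} (hn : 0 < n)
    (hF : ∃ x : F, x ≠ 0 ∧ x ≠ 1) :
    Subgroup.closure (ELGenAdj F n) = EL F n :=
  stmt13_general hF
end

section
/- (Star–mesh, mesh to star.) Let F be a field, n ≥ 3, and let b_{i,j} ∈ F∖{0} for distinct i,j ∈ {1,…,n} with b_{i,j} = b_{j,i}. Then there exist a_1,…,a_n ∈ F∖{0} with σ := Σ_{i=1}^n a_i ≠ 0 and b_{i,j} = a_i a_j/σ for all i ≠ j (i.e., the mesh with weights b_{i,j} has the same boundary behavior as the n-star with weights a_i) if and only if both: (i) b_{i,j} b_{k,ℓ} = b_{i,k} b_{j,ℓ} for all pairwise distinct i,j,k,ℓ; and (ii) there exist an index i and distinct indices k,ℓ ≠ i such that Σ_{j≠i} b_{i,j} + b_{i,k} b_{i,ℓ}/b_{k,ℓ} ≠ 0. In this case the weights are given by a_i = Σ_{j≠i} b_{i,j}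 + b_{i,k} b_{i,ℓ}/b_{k,ℓ}, which is independent of the choice of distinct k,ℓ ≠ i. -/
section StarMeshAux

variable {F : Type*} [Field F] {n : ℕ} {b : Fin n → Fin n → F}

private lemma aux_comm (hsym : ∀ i j, b i j = b j i) (i k l : Fin n) :
    b i k * b i l / b k l = b i l * b i k / b l k := by
  rw [hsym k l]; ring

private lemma aux_swap (hsym : ∀ i j, b i j = b j i) (hnz : ∀ i j, i ≠ j → b i j ≠ 0)
    (hq : ∀ i j k l : Fin n, i ≠ j → i ≠ k → i ≠ l → j ≠ k → j ≠ l → k ≠ l →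
        b i j * b k l = b i k * b j l)
    {i k l l' : Fin n} (hki : k ≠ i) (hli : l ≠ i) (hl'i : l' ≠ i)
    (hkl : k ≠ l) (hkl' : k ≠ l') (hll' : l ≠ l') :
    b i k * b i l / b k l = b i k * b i l' / b k l' := by
  rw [div_eq_div_iff (hnz k l hkl) (hnz k l' hkl')]
  have h := hq i l l' k hli.symm hl'i.symm hki.symm hll' (Ne.symm hkl) (Ne.symm hkl')
  rw [hsym k l', hsym k l]
  linear_combination b i k * h

private lemma aux_wd (hsym : ∀ i j, b i j = b j i) (hnz : ∀ i j, i ≠ j → b i j ≠ 0)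
    (hq : ∀ i j k l : Fin n, i ≠ j → i ≠ k → i ≠ l → j ≠ k → j ≠ l → k ≠ l →
        b i j * b k l = b i k * b j l)
    {i k l k' l' : Fin n} (hki : k ≠ i) (hli : l ≠ i) (hkl : k ≠ l)
    (hk'i : k' ≠ i) (hl'i : l' ≠ i) (hk'l' : k' ≠ l') :
    b i k * b i l / b k l = b i k' * b i l' / b k' l' := by
  by_cases h1 : k = k'
  · subst h1
    by_cases h2 : l = l'
    · subst h2; rfl
    · exact aux_swap hsym hnz hq hki hli hl'i hkl hk'l' h2
  · by_cases h2 : k = l'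
    · subst h2
      rw [aux_comm hsym i k' k]
      by_cases h3 : l = k'
      · subst h3; rfl
      · exact aux_swap hsym hnz hq hki hli hk'i hkl h1 h3
    · by_cases h3 : l = k'
      · subst h3
        rw [aux_comm hsym i k l]
        exact aux_swap hsym hnz hq hli hki hl'i (Ne.symm hkl) hk'l' h2
      · have s1 : b i k * b i l / b k l = b i k * b i k' / b k k' :=
          aux_swap hsym hnz hq hki hli hk'i hkl h1 h3
        have s2 : b i k' * b i k / b k' k = b i k' * b i l' / b k' l' :=
          aux_swap hsym hnz hq hk'i hki hl'i (Ne.symm h1) hk'l' h2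
        rw [s1, aux_comm hsym i k k', s2]

private lemma aux_key {s T : Fin n → F}
    (hsym : ∀ i j, b i j = b j i)
    (hq : ∀ i j k l : Fin n, i ≠ j → i ≠ k → i ≠ l → j ≠ k → j ≠ l → k ≠ l →
        b i j * b k l = b i k * b j l)
    (hs : ∀ i, s i = ∑ j ∈ Finset.univ.erase i, b i j)
    (hTB : ∀ i j k : Fin n, j ≠ i → k ≠ i → j ≠ k → T i * b j k = b i j * b i k)
    (hTT : ∀ i j : Fin n, i ≠ j → T i * T j = b i j * b i j) :
    ∀ i j : Fin n, i ≠ j →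
      (s i + T i) * (s j + T j) = b i j * ∑ m, (s m + T m) := by
  have hTS : ∀ i j : Fin n, i ≠ j → T i * s j = T i * b i j + b i j * (s i - b i j) := by
    intro i j hij
    have hi : i ∈ Finset.univ.erase j := Finset.mem_erase.mpr ⟨hij, Finset.mem_univ i⟩
    have hj : j ∈ Finset.univ.erase i := Finset.mem_erase.mpr ⟨hij.symm, Finset.mem_univ j⟩
    calc T i * s j = ∑ m ∈ Finset.univ.erase j, T i * b j m := by
          rw [hs j, Finset.mul_sum]
      _ = T i * b j i + ∑ m ∈ (Finset.univ.erase j).erase i, T i * b j m :=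
          (Finset.add_sum_erase _ _ hi).symm
      _ = T i * b i j + ∑ m ∈ (Finset.univ.erase j).erase i, b i j * b i m := by
          rw [hsym j i]
          congr 1
          refine Finset.sum_congr rfl fun m hm => ?_
          obtain ⟨hmi, hm'⟩ := Finset.mem_erase.mp hm
          obtain ⟨hmj, -⟩ := Finset.mem_erase.mp hm'
          exact hTB i j m hij.symm hmi (Ne.symm hmj)
      _ = T i * b i j + b i j * (s i - b i j) := by
          rw [← Finset.mul_sum, Finset.erase_right_comm, Finset.sum_erase_eq_sub hj, ← hs i]
  intro i j hij
  have hi : i ∈ Finset.univ.erase j := Finset.mem_erase.mpr ⟨hij, Finset.mem_univ i⟩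
  have hj : j ∈ Finset.univ.erase i := Finset.mem_erase.mpr ⟨hij.symm, Finset.mem_univ j⟩
  set E := (Finset.univ.erase i).erase j with hE
  have hEmem : ∀ m ∈ E, m ≠ i ∧ m ≠ j := by
    intro m hm
    obtain ⟨hmj, hm'⟩ := Finset.mem_erase.mp hm
    exact ⟨(Finset.mem_erase.mp hm').1, hmj⟩
  set X := ∑ m ∈ E, b i m with hX
  set Y := ∑ m ∈ E, b j m with hY
  set D := ∑ m ∈ E, ∑ p ∈ E.erase m, b m p with hD
  set P := ∑ m ∈ E, b i m * b j m with hP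
  have hEE : (Finset.univ.erase j).erase i = E := by
    rw [hE, Finset.erase_right_comm]
  have hsi : s i = b i j + X := by
    rw [hs i, ← Finset.add_sum_erase _ _ hj, hX]
  have hsj : s j = b i j + Y := by
    rw [hs j, ← Finset.add_sum_erase _ _ hi, hsym j i, hEE, hY]
  have hsm : ∀ m ∈ E, s m = b i m + b j m + ∑ p ∈ E.erase m, b m p := by
    intro m hm
    obtain ⟨hmi, hmj⟩ := hEmem m hm
    have hiu : i ∈ Finset.univ.erase m :=
      Finset.mem_erase.mpr ⟨Ne.symm hmi, Finset.mem_univ i⟩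
    have hju : j ∈ (Finset.univ.erase m).erase i :=
      Finset.mem_erase.mpr ⟨hij.symm, Finset.mem_erase.mpr ⟨Ne.symm hmj, Finset.mem_univ j⟩⟩
    rw [hs m, ← Finset.add_sum_erase _ _ hiu, ← Finset.add_sum_erase _ _ hju]
    have hset : ((Finset.univ.erase m).erase i).erase j = E.erase m := by
      rw [hE]
      ext x
      simp only [Finset.mem_erase, Finset.mem_univ, and_true]
      tauto
    rw [hset, hsym m i, hsym m j]
    ring
  have hXY : X * Y = P + b i j * D := by
    rw [hX, hY, Finset.sum_mul_sum, hP, hD, Finset.mul_sum, ← Finset.sum_add_distrib]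
    refine Finset.sum_congr rfl fun m hm => ?_
    obtain ⟨hmi, hmj⟩ := hEmem m hm
    rw [← Finset.add_sum_erase E (fun p => b i m * b j p) hm]
    congr 1
    rw [Finset.mul_sum]
    refine Finset.sum_congr rfl fun p hp => ?_
    have hpm : p ≠ m := (Finset.mem_erase.mp hp).1
    obtain ⟨hpi, hpj⟩ := hEmem p (Finset.mem_of_mem_erase hp)
    exact (hq i j m p hij (Ne.symm hmi) (Ne.symm hpi) (Ne.symm hmj) (Ne.symm hpj)
      (Ne.symm hpm)).symm
  have hTS1 := hTS i j hij
  have hTS2 := hTS j i hij.symm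
  rw [hsym j i] at hTS2
  have hTT' := hTT i j hij
  have h1 : b i j * ∑ m ∈ E, T m = P := by
    rw [Finset.mul_sum, hP]
    refine Finset.sum_congr rfl fun m hm => ?_
    obtain ⟨hmi, hmj⟩ := hEmem m hm
    have h := hTB m i j (Ne.symm hmi) (Ne.symm hmj) hij
    rw [hsym i m, hsym j m]
    linear_combination h
  have h2 : b i j * ∑ m ∈ E, s m = b i j * X + b i j * Y + b i j * D := by
    have h3 : ∑ m ∈ E, s m = X + Y + D := by
      rw [Finset.sum_congr rfl hsm, Finset.sum_add_distrib, Finset.sum_add_distrib,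
        hX, hY, hD]
    rw [h3]; ring
  have hσ : ∑ m, (s m + T m)
      = (s i + T i) + ((s j + T j) + (∑ m ∈ E, s m + ∑ m ∈ E, T m)) := by
    rw [← Finset.add_sum_erase _ _ (Finset.mem_univ i), ← Finset.add_sum_erase _ _ hj,
      ← hE, Finset.sum_add_distrib]
  rw [hσ]
  linear_combination hTS1 + hTS2 + hTT' - h1 - h2 + hXY + s j * hsi + (b i j + X) * hsj

end StarMeshAux

/-- Star–mesh, mesh to star: the `n`-mesh with symmetric nonzero weights `b i j` has the
same boundary behavior as an `n`-star with weights `a i` (which holds precisely when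
`σ = Σ a_i ≠ 0` and `b i j = a i * a j / σ`) if and only if the quadrilateral relations
`b i j * b k l = b i k * b j l` hold for pairwise distinct indices and the quantity
`Σ_{j ≠ i} b i j + b i k * b i l / b k l` is nonzero for some choice of `i` and distinct
`k, l ≠ i`.  In this case `a i = Σ_{j ≠ i} b i j + b i k * b i l / b k l`, independently
of the choice of distinct `k, l ≠ i`. -/
theorem stmt16 {F : Type*} [Field F] {n : ℕ} (hn : 3 ≤ n)
    (b : Fin n → Fin n → F) (hsym : ∀ i j, b i j = b j i)
    (hnz : ∀ i j, i ≠ j → b i j ≠ 0) :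
    ((∃ a : Fin n → F, (∀ i, a i ≠ 0) ∧ (∑ i, a i) ≠ 0 ∧
        ∀ i j, i ≠ j → b i j = a i * a j / (∑ k, a k)) ↔
      ((∀ i j k l : Fin n, i ≠ j → i ≠ k → i ≠ l → j ≠ k → j ≠ l → k ≠ l →
          b i j * b k l = b i k * b j l) ∧
       (∃ i k l : Fin n, k ≠ i ∧ l ≠ i ∧ k ≠ l ∧
          (∑ j ∈ Finset.univ.erase i, b i j) + b i k * b i l / b k l ≠ 0))) ∧
    (∀ a : Fin n → F, (∀ i, a i ≠ 0) → (∑ i, a i) ≠ 0 →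
      (∀ i j, i ≠ j → b i j = a i * a j / (∑ k, a k)) →
      ∀ i k l : Fin n, k ≠ i → l ≠ i → k ≠ l →
        a i = (∑ j ∈ Finset.univ.erase i, b i j) + b i k * b i l / b k l) := by
  obtain ⟨z0, z1, z2, h01, h02, h12⟩ :
      ∃ z0 z1 z2 : Fin n, z0 ≠ z1 ∧ z0 ≠ z2 ∧ z1 ≠ z2 :=
    ⟨⟨0, by omega⟩, ⟨1, by omega⟩, ⟨2, by omega⟩,
      by simp [Fin.ext_iff], by simp [Fin.ext_iff], by simp [Fin.ext_iff]⟩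
  have hpick2 : ∀ i j : Fin n, ∃ m : Fin n, m ≠ i ∧ m ≠ j := by
    intro i j
    by_cases h0 : z0 = i
    · by_cases h1 : z1 = j
      · exact ⟨z2, by rw [← h0]; exact h02.symm, by rw [← h1]; exact h12.symm⟩
      · exact ⟨z1, by rw [← h0]; exact h01.symm, h1⟩
    · by_cases h1 : z0 = j
      · by_cases h2 : z1 = i
        · exact ⟨z2, by rw [← h2]; exact h12.symm, by rw [← h1]; exact h02.symm⟩
        · exact ⟨z1, h2, by rw [← h1]; exact h01.symm⟩
      · exact ⟨z0, h0, h1⟩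
  have huniq : ∀ a : Fin n → F, (∀ i, a i ≠ 0) → (∑ i, a i) ≠ 0 →
      (∀ i j, i ≠ j → b i j = a i * a j / (∑ k, a k)) →
      ∀ i k l : Fin n, k ≠ i → l ≠ i → k ≠ l →
        a i = (∑ j ∈ Finset.univ.erase i, b i j) + b i k * b i l / b k l := by
    intro a ha0 hs hab i k l hk hl hkl
    have h1 : (∑ j ∈ Finset.univ.erase i, b i j)
        = a i * ((∑ m, a m) - a i) / (∑ m, a m) := by
      have hc : ∀ j ∈ Finset.univ.erase i, b i j = a i / (∑ m, a m) * a j := by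
        intro j hj
        rw [hab i j (Finset.ne_of_mem_erase hj).symm]
        ring
      rw [Finset.sum_congr rfl hc, ← Finset.mul_sum,
        Finset.sum_erase_eq_sub (Finset.mem_univ i)]
      ring
    have h2 : b i k * b i l / b k l = a i * a i / (∑ m, a m) := by
      rw [hab i k hk.symm, hab i l hl.symm, hab k l hkl]
      field_simp [ha0 k, ha0 l]
    rw [h1, h2]
    field_simp
    ring
  refine ⟨⟨?_, ?_⟩, huniq⟩
  · rintro ⟨a, ha0, hs, hab⟩
    constructor
    · intro i j k l hij hik hil hjk hjl hkl
      rw [hab i j hij, hab k l hkl, hab i k hik, hab j l hjl]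
      ring
    · refine ⟨z0, z1, z2, h01.symm, h02.symm, h12, ?_⟩
      rw [← huniq a ha0 hs hab z0 z1 z2 h01.symm h02.symm h12]
      exact ha0 z0
  · rintro ⟨hq, i0, k0, l0, hk0, hl0, hkl0, hne⟩
    have hpick : ∀ i : Fin n, ∃ k l : Fin n, k ≠ i ∧ l ≠ i ∧ k ≠ l := by
      intro i
      obtain ⟨k, hk, -⟩ := hpick2 i i
      obtain ⟨l, hl1, hl2⟩ := hpick2 i k
      exact ⟨k, l, hk, hl1, Ne.symm hl2⟩
    choose p1 p2 hp1 hp2 hp12 using hpick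
    set T : Fin n → F := fun i => b i (p1 i) * b i (p2 i) / b (p1 i) (p2 i) with hTdef
    have hT : ∀ i k l : Fin n, k ≠ i → l ≠ i → k ≠ l →
        T i = b i k * b i l / b k l := fun i k l hk hl hkl =>
      aux_wd hsym hnz hq (hp1 i) (hp2 i) (hp12 i) hk hl hkl
    have hTB : ∀ i j k : Fin n, j ≠ i → k ≠ i → j ≠ k →
        T i * b j k = b i j * b i k := by
      intro i j k hj hk hjk
      rw [hT i j k hj hk hjk, div_mul_cancel₀ _ (hnz j k hjk)]
    have hTT : ∀ i j : Fin n, i ≠ j → T i * T j = b i j * b i j := by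
      intro i j hij
      obtain ⟨m, hmi, hmj⟩ := hpick2 i j
      have e1 : b j m ≠ 0 := hnz j m (Ne.symm hmj)
      have e2 : b i m ≠ 0 := hnz i m (Ne.symm hmi)
      rw [hT i j m hij.symm hmi (Ne.symm hmj), hT j i m hij hmj (Ne.symm hmi), hsym j i]
      field_simp
    set s : Fin n → F := fun i => ∑ j ∈ Finset.univ.erase i, b i j with hsdef
    have hs : ∀ i, s i = ∑ j ∈ Finset.univ.erase i, b i j := fun i => rfl
    set a : Fin n → F := fun i => s i + T i with hadef
    have hstot : ∀ i j : Fin n, i ≠ j → a i * a j = b i j * ∑ m, a m :=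
      fun i j h => aux_key hsym hq hs hTB hTT i j h
    have hai0 : a i0 ≠ 0 := by
      have ha : a i0 = (∑ j ∈ Finset.univ.erase i0, b i0 j) + b i0 k0 * b i0 l0 / b k0 l0 := by
        show s i0 + T i0 = _
        rw [hT i0 k0 l0 hk0 hl0 hkl0, hs i0]
      rw [ha]; exact hne
    have hσ0 : (∑ m, a m) ≠ 0 := by
      intro h0
      have hz : ∀ j ∈ Finset.univ.erase i0, a j = 0 := by
        intro j hj
        have hji : j ≠ i0 := (Finset.mem_erase.mp hj).1
        have h := hstot i0 j hji.symm
        rw [h0, mul_zero] at h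
        exact (mul_eq_zero.mp h).resolve_left hai0
      have hz2 : ∑ m, a m = a i0 := by
        rw [← Finset.add_sum_erase _ _ (Finset.mem_univ i0), Finset.sum_eq_zero hz, add_zero]
      exact hai0 (by rw [← hz2, h0])
    have ha0 : ∀ j, a j ≠ 0 := by
      intro j
      by_cases hj : j = i0
      · rw [hj]; exact hai0
      · have h := hstot i0 j (fun h => hj h.symm)
        intro h0
        rw [h0, mul_zero] at h
        exact mul_ne_zero (hnz i0 j (fun h => hj h.symm)) hσ0 h.symm
    exact ⟨a, ha0, hσ0, fun i j hij => (eq_div_iff hσ0).mpr (hstot i j hij).symm⟩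
end
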